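/- arXiv:1203.6303 — 4 statements merged into one kernel-verified Lean document; each statement's English description precedes it below -/
import Mathlib

section
/- Suppose w : ℝ^d × Ω → ℝ is jointly measurable, is Lipschitz in its first variable with a Lipschitz constant C independent of ω, has stationary increments, i.e. w(x, τ_z ω) − w(y, τ_z ω) = w(x+z, ω) − w(y+z, ω) for all x, y, z ∈ ℝ^d and ω ∈ Ω, and has mean-zero increments, i.e. E[w(x,·) − w(0,·)] = 0 for every x ∈ ℝ^d. Then, almost surely in ω, lim_{|y|→∞} w(y,ω)/|y| = 0. -/
open MeasureTheory Filter Topology Bornology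
open scoped RealInnerProductSpace NNReal

noncomputable section

abbrev Ed (d : ℕ) := EuclideanSpace ℝ (Fin d)

/-!
Along a direction `q`, stationarity makes `n ↦ w (n • q) - w 0` the Birkhoff sums of the
mean-zero increment `w q - w 0` under `τ q`. For `ε > 0`, the event that these sums stay below
`K + n ε` for some `K` is invariant under every `τ z`, since a shift by `z` changes all of them by
at most `2 C ‖z‖`; the maximal ergodic theorem gives it positive probability, so by ergodicity it
is almost sure. Applied to `w` and `-w`, this gives `w (n • q) / n → 0` almost surely,
simultaneously for all `q` in a countable dense set. The rescalings `x ↦ w (n • x) / n` are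
uniformly Lipschitz, so they then tend to `0` uniformly on the unit ball, and evaluating at
`n = ⌈‖y‖⌉`, `x = y / n` gives `w y / ‖y‖ → 0`.
-/

section MaximalErgodic

variable {α : Type*} {T : α → α} {g : α → ℝ}

/-- The running maximum `max (0, S₁, …, S_N)` of the Birkhoff sums `Sₙ = birkhoffSum T g n`,
defined through its recursion `M_{N+1} = max 0 (g + M_N ∘ T)`. -/
def birkhoffMax (T : α → α) (g : α → ℝ) : ℕ → α → ℝ
  | 0 => 0
  | N + 1 => fun x => max 0 (g x + birkhoffMax T g N (T x))

theorem birkhoffMax_nonneg (N : ℕ) (x : α) : 0 ≤ birkhoffMax T g N x := by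
  cases N with
  | zero => rfl
  | succ N => exact le_max_left _ _

theorem birkhoffMax_le_succ (N : ℕ) (x : α) :
    birkhoffMax T g N x ≤ birkhoffMax T g (N + 1) x := by
  induction N generalizing x with
  | zero => exact birkhoffMax_nonneg 1 x
  | succ N ih => exact max_le_max le_rfl (by gcongr; exact ih (T x))

theorem birkhoffSum_le_birkhoffMax (N : ℕ) (x : α) :
    birkhoffSum T g N x ≤ birkhoffMax T g N x := by
  induction N generalizing x with
  | zero => simp [birkhoffMax]
  | succ N ih =>
    rw [birkhoffSum_succ']
    exact le_max_of_le_right (by gcongr; exact ih (T x))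

theorem birkhoffMax_sub_comp_le_indicator (N : ℕ) (x : α) :
    birkhoffMax T g N x - birkhoffMax T g N (T x) ≤
      {y | 0 < birkhoffMax T g N y}.indicator g x := by
  by_cases hx : x ∈ {y | 0 < birkhoffMax T g N y}
  · rw [Set.indicator_of_mem hx]
    cases N with
    | zero => exact (lt_irrefl (0 : ℝ) hx).elim
    | succ N =>
      have hmax : birkhoffMax T g (N + 1) x = g x + birkhoffMax T g N (T x) :=
        max_eq_right (le_of_not_ge fun h => (max_eq_left h ▸ hx : (0 : ℝ) < 0).false)
      linarith [birkhoffMax_le_succ (T := T) (g := g) N (T x)]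
  · rw [Set.indicator_of_notMem hx]
    linarith [not_lt.mp (show ¬0 < birkhoffMax T g N x from hx),
      birkhoffMax_nonneg (T := T) (g := g) N (T x)]

variable [MeasurableSpace α] {μ : Measure α}

theorem measurable_birkhoffMax (hT : Measurable T) (hg : Measurable g) (N : ℕ) :
    Measurable (birkhoffMax T g N) := by
  induction N with
  | zero => exact measurable_const
  | succ N ih => exact measurable_const.max (hg.add (ih.comp hT))

theorem integrable_birkhoffMax (hT : MeasurePreserving T μ μ) (hg : Integrable g μ) (N : ℕ) :
    Integrable (birkhoffMax T g N) μ := by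
  induction N with
  | zero => exact integrable_zero _ _ _
  | succ N ih => exact (integrable_zero _ _ _).sup (hg.add (hT.integrable_comp_of_integrable ih))

/-- The maximal ergodic theorem. -/
theorem setIntegral_birkhoffMax_pos_nonneg (hT : MeasurePreserving T μ μ) (hgm : Measurable g)
    (hg : Integrable g μ) (N : ℕ) : 0 ≤ ∫ x in {y | 0 < birkhoffMax T g N y}, g x ∂μ := by
  have hM := integrable_birkhoffMax hT hg N
  have hMT : Integrable (fun x => birkhoffMax T g N (T x)) μ := hT.integrable_comp_of_integrable hM
  have hMm := measurable_birkhoffMax hT.measurable hgm N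
  have hinv : ∫ x, birkhoffMax T g N (T x) ∂μ = ∫ x, birkhoffMax T g N x ∂μ := by
    rw [← integral_map hT.measurable.aemeasurable hMm.aestronglyMeasurable, hT.map_eq]
  have hset : MeasurableSet {y | 0 < birkhoffMax T g N y} :=
    measurableSet_lt measurable_const hMm
  calc (0 : ℝ) = ∫ x, (birkhoffMax T g N x - birkhoffMax T g N (T x)) ∂μ := by
        rw [integral_sub hM hMT, hinv, sub_self]
    _ ≤ ∫ x, {y | 0 < birkhoffMax T g N y}.indicator g x ∂μ :=
        integral_mono (hM.sub hMT) (hg.indicator hset)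
          (birkhoffMax_sub_comp_le_indicator N)
    _ = ∫ x in {y | 0 < birkhoffMax T g N y}, g x ∂μ := integral_indicator hset

theorem setIntegral_iUnion_birkhoffMax_pos_nonneg (hT : MeasurePreserving T μ μ)
    (hgm : Measurable g) (hg : Integrable g μ) :
    0 ≤ ∫ x in ⋃ N, {y | 0 < birkhoffMax T g N y}, g x ∂μ :=
  ge_of_tendsto (tendsto_setIntegral_of_monotone
      (fun N => measurableSet_lt measurable_const (measurable_birkhoffMax hT.measurable hgm N))
      (monotone_nat_of_le_succ fun N _ hx => hx.trans_le (birkhoffMax_le_succ N _))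
      hg.integrableOn)
    (Eventually.of_forall (setIntegral_birkhoffMax_pos_nonneg hT hgm hg))

theorem measure_forall_birkhoffSum_nonpos_pos (hT : MeasurePreserving T μ μ) (hgm : Measurable g)
    (hg : Integrable g μ) (hneg : ∫ x, g x ∂μ < 0) :
    0 < μ {x | ∀ n, birkhoffSum T g n x ≤ 0} := by
  refine pos_iff_ne_zero.mpr fun hnull => hneg.not_ge ?_
  have hcover : ∀ᵐ x ∂μ, x ∈ ⋃ N, {y | 0 < birkhoffMax T g N y} := by
    filter_upwards [measure_eq_zero_iff_ae_notMem.mp hnull] with x hx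
    obtain ⟨n, hn⟩ := not_forall.mp hx
    exact Set.mem_iUnion.mpr ⟨n, (not_le.mp hn).trans_le (birkhoffSum_le_birkhoffMax n x)⟩
  rw [← setIntegral_eq_integral_of_ae_compl_eq_zero (hcover.mono fun x hx hx' => absurd hx hx')]
  exact setIntegral_iUnion_birkhoffMax_pos_nonneg hT hgm hg

theorem measure_forall_birkhoffSum_le_pos [IsProbabilityMeasure μ] (hT : MeasurePreserving T μ μ)
    (hgm : Measurable g) (hg : Integrable g μ) {c : ℝ} (hc : ∫ x, g x ∂μ < c) :
    0 < μ {x | ∀ n : ℕ, birkhoffSum T g n x ≤ n * c} := by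
  have key := measure_forall_birkhoffSum_nonpos_pos hT (hgm.sub measurable_const)
    (hg.sub (integrable_const c)) (by simpa [integral_sub hg (integrable_const c)] using hc)
  simpa [birkhoffSum_sub, birkhoffSum, Finset.sum_const, sub_nonpos] using key

end MaximalErgodic

theorem LipschitzWith.nsmul_div {E : Type*} [SeminormedAddCommGroup E] {f : E → ℝ} {K : ℝ≥0}
    (hf : LipschitzWith K f) (n : ℕ) : LipschitzWith K (fun x => f (n • x) / n) := by
  rcases n.eq_zero_or_pos with rfl | hn
  · simpa using LipschitzWith.const' (0 : ℝ)
  refine LipschitzWith.of_dist_le_mul fun x y => ?_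
  have hn' : (0 : ℝ) < n := Nat.cast_pos.mpr hn
  rw [Real.dist_eq, ← sub_div, abs_div, Nat.abs_cast, div_le_iff₀ hn', ← Real.dist_eq]
  calc dist (f (n • x)) (f (n • y)) ≤ K * ‖n • (x - y)‖ := by
        simpa [dist_eq_norm, nsmul_sub] using hf.dist_le_mul (n • x) (n • y)
    _ ≤ K * (n * dist x y) := by
        rw [dist_eq_norm]; gcongr; exact norm_nsmul_le
    _ = K * dist x y * n := by ring

theorem tendstoUniformlyOn_zero_of_dense {ι X G : Type*} [PseudoMetricSpace X]
    [SeminormedAddCommGroup G] {l : Filter ι} {F : ι → X → G} {K : ℝ≥0}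
    (hF : ∀ i, LipschitzWith K (F i)) {s : Set X} (hs : Dense s)
    (h : ∀ x ∈ s, Tendsto (F · x) l (𝓝 0)) {k : Set X} (hk : IsCompact k) :
    TendstoUniformlyOn F 0 l k := by
  rw [Metric.tendstoUniformlyOn_iff]
  intro ε hε
  have hδ : 0 < ε / (2 * (K + 1)) := by positivity
  obtain ⟨t, hts, htf, hkt⟩ := hk.elim_finite_subcover_image (b := s)
    (c := fun y : X => Metric.ball y (ε / (2 * (K + 1)))) (fun _ _ => Metric.isOpen_ball)
    fun x _ => by
      obtain ⟨y, hy, hxy⟩ := hs.exists_dist_lt x hδ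
      exact Set.mem_iUnion₂.mpr ⟨y, hy, hxy⟩
  filter_upwards [(eventually_all_finite htf).mpr fun y hy =>
    (h y (hts hy)).eventually (Metric.ball_mem_nhds 0 (half_pos hε))] with i hi x hx
  obtain ⟨y, hyt, hxy⟩ := Set.mem_iUnion₂.mp (hkt hx)
  have hKδ : K * (ε / (2 * (K + 1))) ≤ ε / 2 := by
    rw [mul_div_assoc', div_le_div_iff₀ (by positivity) two_pos]
    nlinarith [K.coe_nonneg]
  calc dist ((0 : X → G) x) (F i x) ≤ dist (F i y) 0 + dist (F i x) (F i y) := by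
        rw [Pi.zero_apply, dist_comm, add_comm]; exact dist_triangle _ _ _
    _ < ε / 2 + K * (ε / (2 * (K + 1))) := by
        refine add_lt_add_of_lt_of_le (hi y hyt) ((hF i).dist_le_mul x y |>.trans ?_)
        gcongr; exact hxy.le
    _ ≤ ε := by linarith

theorem tendsto_div_norm_cobounded_of_dense {E : Type*} [NormedAddCommGroup E] [NormedSpace ℝ E]
    [ProperSpace E] {f : E → ℝ} {K : ℝ≥0} (hf : LipschitzWith K f) {s : Set E} (hs : Dense s)
    (h : ∀ x ∈ s, Tendsto (fun n : ℕ => f (n • x) / n) atTop (𝓝 0)) :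
    Tendsto (fun y => f y / ‖y‖) (cobounded E) (𝓝 0) := by
  have hunif : TendstoUniformlyOn (fun (n : ℕ) x => f (n • x) / n) 0 atTop
      (Metric.closedBall 0 1) :=
    tendstoUniformlyOn_zero_of_dense hf.nsmul_div hs h (isCompact_closedBall 0 1)
  have hnorm := tendsto_norm_cobounded_atTop (E := E)
  set N : E → ℕ := fun y => ⌈‖y‖⌉₊
  have hmem : ∀ y, (N y : ℝ)⁻¹ • y ∈ Metric.closedBall (0 : E) 1 := fun y => by
    rw [mem_closedBall_zero_iff, norm_smul, norm_inv, RCLike.norm_natCast]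
    exact inv_mul_le_one_of_le₀ (Nat.le_ceil _) (Nat.cast_nonneg _)
  have hsmall : Tendsto (fun y => f (N y • ((N y : ℝ)⁻¹ • y)) / N y) (cobounded E) (𝓝 0) :=
    Uniform.tendsto_nhds_right.mpr <| (tendstoUniformlyOnFilter_iff_tendsto.mp
      (tendstoUniformlyOn_iff_tendstoUniformlyOnFilter.mp hunif)).comp
      ((tendsto_nat_ceil_atTop.comp hnorm).prodMk (tendsto_principal.mpr (.of_forall hmem)))
  have hratio : Tendsto (fun y => (N y : ℝ) / ‖y‖) (cobounded E) (𝓝 1) :=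
    tendsto_nat_ceil_div_atTop.comp hnorm
  have hprod : Tendsto (fun y => f (N y • ((N y : ℝ)⁻¹ • y)) / N y * (N y / ‖y‖)) (cobounded E)
      (𝓝 0) := by simpa using hsmall.mul hratio
  refine hprod.congr' ?_
  filter_upwards [hnorm.eventually_gt_atTop 0] with y hy
  have hN : (N y : ℝ) ≠ 0 := (Nat.cast_pos.mpr (Nat.ceil_pos.mpr hy)).ne'
  rw [← Nat.cast_smul_eq_nsmul ℝ, smul_smul, mul_inv_cancel₀ hN, one_smul]
  field_simp

section StationaryIncrements

variable {E Ω : Type*}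

def HasStationaryIncrements [Add E] (τ : E → Ω → Ω) (w : E → Ω → ℝ) : Prop :=
  ∀ (x y z : E) (ω : Ω), w x (τ z ω) - w y (τ z ω) = w (x + z) ω - w (y + z) ω

namespace HasStationaryIncrements

variable [AddCommMonoid E] {τ : E → Ω → Ω} {w : E → Ω → ℝ}

theorem neg (hw : HasStationaryIncrements τ w) : HasStationaryIncrements τ (-w) := by
  intro x y z ω
  simp only [Pi.neg_apply]
  linarith [hw x y z ω]

theorem sub_iterate (hw : HasStationaryIncrements τ w) (q : E) (n : ℕ) (x y : E) (ω : Ω) :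
    w x ((τ q)^[n] ω) - w y ((τ q)^[n] ω) = w (x + n • q) ω - w (y + n • q) ω := by
  induction n generalizing ω with
  | zero => simp
  | succ n ih => rw [Function.iterate_succ_apply, ih, hw, succ_nsmul, add_assoc, add_assoc]

theorem birkhoffSum_eq (hw : HasStationaryIncrements τ w) (q : E) (n : ℕ) (ω : Ω) :
    birkhoffSum (τ q) (fun ω => w q ω - w 0 ω) n ω = w (n • q) ω - w 0 ω := by
  induction n with
  | zero => simp
  | succ n ih =>
    rw [birkhoffSum_succ, ih, hw.sub_iterate, zero_add, ← succ_nsmul']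
    ring

end HasStationaryIncrements

end StationaryIncrements

theorem exists_nat_forall_le_add_mul_of_abs_sub_le {a b : ℕ → ℝ} {D ε : ℝ}
    (hab : ∀ n, |a n - b n| ≤ D) (ha : ∃ K : ℕ, ∀ n, a n ≤ K + n * ε) :
    ∃ K : ℕ, ∀ n, b n ≤ K + n * ε := by
  obtain ⟨K, hK⟩ := ha
  exact ⟨K + ⌈D⌉₊, fun n => by push_cast; linarith [hK n, (abs_le.mp (hab n)).1, Nat.le_ceil D]⟩

theorem tendsto_div_natCast_of_forall_abs_le_add {a : ℕ → ℝ}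
    (h : ∀ m : ℕ, ∃ K : ℝ, ∀ n : ℕ, |a n| ≤ K + n / (m + 1)) :
    Tendsto (fun n => a n / n) atTop (𝓝 0) := by
  refine Asymptotics.IsLittleO.tendsto_div_nhds_zero (Asymptotics.isLittleO_iff.mpr fun c hc => ?_)
  obtain ⟨m, hm⟩ := exists_nat_one_div_lt (half_pos hc)
  obtain ⟨K, hK⟩ := h m
  filter_upwards [eventually_ge_atTop ⌈2 * K / c⌉₊] with n hn
  have hKn : K ≤ c / 2 * n := by
    have := (div_le_iff₀ hc).mp (Nat.ceil_le.mp hn)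
    linarith
  have hmn : (n : ℝ) / (m + 1) ≤ c / 2 * n := by
    rw [div_eq_mul_one_div, mul_comm]
    exact mul_le_mul_of_nonneg_right hm.le n.cast_nonneg
  rw [Real.norm_eq_abs, RCLike.norm_natCast]
  linarith [hK n]

section Ergodic

variable {E Ω : Type*} [NormedAddCommGroup E] {τ : E → Ω → Ω} {w : E → Ω → ℝ} {C : ℝ≥0}

theorem HasStationaryIncrements.abs_comp_sub_le (hw : HasStationaryIncrements τ w)
    (hwlip : ∀ ω, LipschitzWith C (fun y => w y ω)) (x z : E) (ω : Ω) :
    |(w x (τ z ω) - w 0 (τ z ω)) - (w x ω - w 0 ω)| ≤ 2 * C * ‖z‖ := by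
  have hlip : ∀ u v, |w u ω - w v ω| ≤ C * ‖u - v‖ := fun u v => by
    simpa [Real.dist_eq, dist_eq_norm] using (hwlip ω).dist_le_mul u v
  rw [hw, zero_add]
  calc |w (x + z) ω - w z ω - (w x ω - w 0 ω)|
      ≤ |w (x + z) ω - w x ω| + |w 0 ω - w z ω| := by
        rw [show w (x + z) ω - w z ω - (w x ω - w 0 ω)
          = (w (x + z) ω - w x ω) + (w 0 ω - w z ω) by ring]
        exact abs_add_le _ _
    _ ≤ C * ‖z‖ + C * ‖z‖ := by
        gcongr
        · simpa using hlip (x + z) x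
        · simpa using hlip 0 z
    _ = 2 * C * ‖z‖ := by ring

variable [MeasurableSpace Ω] {P : Measure Ω} [IsProbabilityMeasure P]
  (hτerg : ∀ A : Set Ω, MeasurableSet A → (∀ z, τ z ⁻¹' A = A) → P A = 0 ∨ P A = 1)
  (hwm : ∀ x, Measurable (w x)) (hwlip : ∀ ω, LipschitzWith C (fun y => w y ω))
  (hw : HasStationaryIncrements τ w) {q : E} (hτ : MeasurePreserving (τ q) P P)
  (hmean : ∫ ω, (w q ω - w 0 ω) ∂P = 0)
include hτerg hwm hwlip hw hτ hmean

theorem ae_exists_le_add_mul {ε : ℝ} (hε : 0 < ε) :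
    ∀ᵐ ω ∂P, ∃ K : ℕ, ∀ n : ℕ, w (n • q) ω - w 0 ω ≤ K + n * ε := by
  set A := {ω | ∃ K : ℕ, ∀ n : ℕ, w (n • q) ω - w 0 ω ≤ K + n * ε}
  have hA_meas : MeasurableSet A := by
    simp only [A, Set.ofPred_exists, Set.ofPred_forall]
    exact .iUnion fun K => .iInter fun n => measurableSet_le ((hwm _).sub (hwm 0)) measurable_const
  have hA_inv : ∀ z, τ z ⁻¹' A = A := fun z => Set.ext fun ω =>
    ⟨exists_nat_forall_le_add_mul_of_abs_sub_le fun n => hw.abs_comp_sub_le hwlip _ z ω,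
      exists_nat_forall_le_add_mul_of_abs_sub_le fun n => by
        rw [abs_sub_comm]; exact hw.abs_comp_sub_le hwlip _ z ω⟩
  have hF : Integrable (fun ω => w q ω - w 0 ω) P :=
    .of_bound ((hwm q).sub (hwm 0)).aestronglyMeasurable (C * ‖q‖) (ae_of_all _ fun ω => by
      simpa [dist_eq_norm] using (hwlip ω).dist_le_mul q 0)
  have hA_pos : 0 < P A := by
    refine (measure_forall_birkhoffSum_le_pos hτ ((hwm q).sub (hwm 0)) hF
      (hmean ▸ hε)).trans_le (measure_mono fun ω hω => ⟨0, fun n => ?_⟩)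
    rw [Nat.cast_zero, zero_add, ← hw.birkhoffSum_eq]
    exact hω n
  have hA_one : P A = 1 := (hτerg A hA_meas hA_inv).resolve_left hA_pos.ne'
  exact (ae_iff_measure_eq hA_meas.nullMeasurableSet).mpr (by rw [hA_one, measure_univ])

theorem ae_tendsto_div_natCast : ∀ᵐ ω ∂P, Tendsto (fun n : ℕ => w (n • q) ω / n) atTop (𝓝 0) := by
  have hmean_neg : ∫ ω, ((-w) q ω - (-w) 0 ω) ∂P = 0 := by
    simp only [Pi.neg_apply, neg_sub_neg, ← neg_sub (w q _), integral_neg, hmean, neg_zero]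
  have hbound : ∀ᵐ ω ∂P, ∀ m : ℕ,
      (∃ K : ℕ, ∀ n : ℕ, w (n • q) ω - w 0 ω ≤ K + n * (1 / (m + 1))) ∧
      (∃ K : ℕ, ∀ n : ℕ, (-w) (n • q) ω - (-w) 0 ω ≤ K + n * (1 / (m + 1))) :=
    ae_all_iff.mpr fun m =>
      (ae_exists_le_add_mul hτerg hwm hwlip hw hτ hmean Nat.one_div_pos_of_nat).and
        (ae_exists_le_add_mul hτerg (fun x => (hwm x).neg) (fun ω => (hwlip ω).neg) hw.neg hτ
          hmean_neg Nat.one_div_pos_of_nat)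
  filter_upwards [hbound] with ω hω
  refine tendsto_div_natCast_of_forall_abs_le_add fun m => ?_
  obtain ⟨⟨K₁, h₁⟩, ⟨K₂, h₂⟩⟩ := hω m
  refine ⟨K₁ + K₂ + |w 0 ω|, fun n => abs_le.mpr ⟨?_, ?_⟩⟩
  all_goals
    have h₁ := h₁ n
    have h₂ := h₂ n
    simp only [Pi.neg_apply, mul_one_div] at h₁ h₂
    linarith [le_abs_self (w 0 ω), neg_abs_le (w 0 ω), K₁.cast_nonneg (α := ℝ),
      K₂.cast_nonneg (α := ℝ)]

end Ergodic

theorem statement_4_general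
    (d : ℕ)
    {Ω : Type*} [MeasurableSpace Ω] (P : Measure Ω) [IsProbabilityMeasure P]
    (τ : Ed d → Ω → Ω)
    (hτmp : ∀ y : Ed d, MeasurePreserving (τ y) P P)
    (hτerg : ∀ A : Set Ω, MeasurableSet A → (∀ z : Ed d, τ z ⁻¹' A = A) → P A = 0 ∨ P A = 1)
    (w : Ed d → Ω → ℝ)
    (hwmeas : Measurable fun x : Ed d × Ω => w x.1 x.2)
    (C : ℝ≥0)
    (hwlip : ∀ ω : Ω, LipschitzWith C (fun y => w y ω))
    (hstat : ∀ (x y z : Ed d) (ω : Ω), w x (τ z ω) - w y (τ z ω) = w (x + z) ω - w (y + z) ω)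
    (hmean : ∀ x : Ed d, ∫ ω, (w x ω - w 0 ω) ∂P = 0) :
    ∀ᵐ ω ∂P, Tendsto (fun y : Ed d => w y ω / ‖y‖) (cobounded (Ed d)) (𝓝 0) := by
  obtain ⟨s, hs_count, hs_dense⟩ := TopologicalSpace.exists_countable_dense (Ed d)
  have hwm : ∀ x, Measurable (w x) := fun x => hwmeas.comp measurable_prodMk_left
  have hdir : ∀ᵐ ω ∂P, ∀ q ∈ s, Tendsto (fun n : ℕ => w (n • q) ω / n) atTop (𝓝 0) :=
    (ae_ball_iff hs_count).mpr fun q _ =>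
      ae_tendsto_div_natCast hτerg hwm hwlip hstat (hτmp q) (hmean q)
  filter_upwards [hdir] with ω hω
  exact tendsto_div_norm_cobounded_of_dense (hwlip ω) hs_dense hω

/-- Kozlov's lemma: a jointly measurable function, Lipschitz in its first
variable uniformly in ω, with stationary and mean-zero increments, is almost surely
strictly sublinear at infinity. -/
theorem statement_4
    (d : ℕ) (hd : 0 < d)
    {Ω : Type*} [MeasurableSpace Ω] (P : Measure Ω) [IsProbabilityMeasure P]
    (τ : Ed d → Ω → Ω)
    (hτmeas : ∀ y : Ed d, Measurable (τ y))
    (hτmp : ∀ y : Ed d, MeasurePreserving (τ y) P P)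
    (hτgrp : ∀ x y : Ed d, τ (x + y) = τ x ∘ τ y)
    (hτzero : τ 0 = id)
    (hτerg : ∀ A : Set Ω, MeasurableSet A → (∀ z : Ed d, τ z ⁻¹' A = A) → P A = 0 ∨ P A = 1)
    (w : Ed d → Ω → ℝ)
    (hwmeas : Measurable fun x : Ed d × Ω => w x.1 x.2)
    (C : ℝ≥0)
    (hwlip : ∀ ω : Ω, LipschitzWith C (fun y => w y ω))
    (hstat : ∀ (x y z : Ed d) (ω : Ω), w x (τ z ω) - w y (τ z ω) = w (x + z) ω - w (y + z) ω)
    (hmean : ∀ x : Ed d, ∫ ω, (w x ω - w 0 ω) ∂P = 0) :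
    ∀ᵐ ω ∂P, Tendsto (fun y : Ed d => w y ω / ‖y‖) (cobounded (Ed d)) (𝓝 0) :=
  statement_4_general d P τ hτmp hτerg w hwmeas C hwlip hstat hmean
end
end

section
/- Each of the functions H̄₊, H̄₋ and Ĥ is continuous and coercive on ℝ^d (tends to +∞ as |p| → ∞) and satisfies F((p+q)/2) ≤ Λ(F(p), F(q)) for all p, q ∈ ℝ^d, where F denotes the function in question. Moreover, for every p ∈ ℝ^d: H̄* ≤ min{H̄₊(p), H̄₋(p)} ≤ Ĥ(p) ≤ sup_{y ∈ ℝ^d} H(p,y) < ∞. -/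
open MeasureTheory Filter Topology Bornology
open scoped RealInnerProductSpace NNReal

noncomputable section

/-- The set 𝓛 of globally Lipschitz real-valued functions on ℝ^d. -/
def LipFuns (d : ℕ) : Set (Ed d → ℝ) := {w | ∃ C : ℝ≥0, LipschitzWith C w}

/-- SL⁺ : Lipschitz functions sublinear from below, i.e. liminf_{|y|→∞} w(y)/|y| ≥ 0. -/
def SLplus (d : ℕ) : Set (Ed d → ℝ) :=
  {w | w ∈ LipFuns d ∧ ∀ ε : ℝ, 0 < ε → ∃ R : ℝ, ∀ y : Ed d, R ≤ ‖y‖ → -ε ≤ w y / ‖y‖}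

/-- SL⁻ : Lipschitz functions sublinear from above, i.e. limsup_{|y|→∞} w(y)/|y| ≤ 0. -/
def SLminus (d : ℕ) : Set (Ed d → ℝ) :=
  {w | w ∈ LipFuns d ∧ ∀ ε : ℝ, 0 < ε → ∃ R : ℝ, ∀ y : Ed d, R ≤ ‖y‖ → w y / ‖y‖ ≤ ε}

/-- 𝓢 : Lipschitz functions strictly sublinear at infinity. -/
def Scal (d : ℕ) : Set (Ed d → ℝ) := SLplus d ∩ SLminus d

/-- H̄₊(p) = inf_{w ∈ SL⁺} esssup_y H(p + Dw(y), y). -/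
def HbarPlus (d : ℕ) (H : Ed d → Ed d → ℝ) (p : Ed d) : ℝ :=
  sInf {t | ∃ w ∈ SLplus d, t = essSup (fun y => H (p + gradient w y) y) volume}

/-- H̄₋(p) = inf_{w ∈ SL⁻} esssup_y H(p + Dw(y), y). -/
def HbarMinus (d : ℕ) (H : Ed d → Ed d → ℝ) (p : Ed d) : ℝ :=
  sInf {t | ∃ w ∈ SLminus d, t = essSup (fun y => H (p + gradient w y) y) volume}

/-- Ĥ(p) = inf_{w ∈ 𝓢} esssup_y H(p + Dw(y), y). -/
def Hhat (d : ℕ) (H : Ed d → Ed d → ℝ) (p : Ed d) : ℝ :=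
  sInf {t | ∃ w ∈ Scal d, t = essSup (fun y => H (p + gradient w y) y) volume}

/-- H̄* = inf_{w ∈ 𝓛} esssup_y H(Dw(y), y). -/
def Hstar (d : ℕ) (H : Ed d → Ed d → ℝ) : ℝ :=
  sInf {t | ∃ w ∈ LipFuns d, t = essSup (fun y => H (gradient w y) y) volume}

/-- m_μ(y,x) = sup { w(y) − w(x) : w ∈ 𝓛, H(Dw,z) ≤ μ a.e. }. -/
def mMu (d : ℕ) (H : Ed d → Ed d → ℝ) (μ : ℝ) (y x : Ed d) : ℝ :=
  sSup {t | ∃ w ∈ LipFuns d, (∀ᵐ z ∂volume, H (gradient w z) z ≤ μ) ∧ t = w y - w x}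

/-- Viscosity subsolution of F(Du, y) ≤ μ in U. -/
def ViscSub (d : ℕ) (F : Ed d → Ed d → ℝ) (μ : ℝ) (U : Set (Ed d)) (u : Ed d → ℝ) : Prop :=
  ∀ (φ : Ed d → ℝ) (x₀ : Ed d), x₀ ∈ U → ContDiffAt ℝ 1 φ x₀ →
    IsLocalMaxOn (fun y => u y - φ y) U x₀ → F (gradient φ x₀) x₀ ≤ μ

/-- Viscosity supersolution of F(Dv, y) ≥ μ in U. -/
def ViscSuper (d : ℕ) (F : Ed d → Ed d → ℝ) (μ : ℝ) (U : Set (Ed d)) (v : Ed d → ℝ) : Prop :=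
  ∀ (φ : Ed d → ℝ) (x₀ : Ed d), x₀ ∈ U → ContDiffAt ℝ 1 φ x₀ →
    IsLocalMinOn (fun y => v y - φ y) U x₀ → μ ≤ F (gradient φ x₀) x₀ 

/-!
Each of `HbarPlus`, `HbarMinus`, `Hhat` is the infimum, over a convex class `W` of Lipschitz
correctors containing `0`, of the cost `esssup_y H (p + Dw y) y`.

Continuity: for a near-optimal `w`, coercivity keeps `p + Dw` a.e. in a fixed ball, on which `H` is
uniformly continuous, so the cost of that fixed `w` moves little with `p`. The midpoint inequality:
averaging two correctors averages their gradients, and (sqc) with the monotonicity and continuity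
of `Λ` passes to the infimum. Coercivity: if the cost at `p` stayed below `M` while `|p|` is large,
then `⟪p / |p|, Dw⟫ ≤ -c < 0` a.e.; averaging over the unit ball, `w` decreases at a linear rate along
`p`, which sublinearity from below forbids (for `SL⁻`, apply this to `-w` along `-p`). Finally `H̄*`
is below every cost because `⟪p, ·⟫ + w` is Lipschitz with gradient `p + Dw`, and `w = 0` bounds each
infimum by `sup_y H(p, y)`.
-/

section EssSup

variable {α : Type*} [MeasurableSpace α] {μ : Measure α} {f : α → ℝ} {M : ℝ}

lemma isBoundedUnder_ae_of_abs_le (hf : ∀ x, |f x| ≤ M) : IsBoundedUnder (· ≤ ·) (ae μ) f :=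
  isBoundedUnder_of ⟨M, fun x => (abs_le.1 (hf x)).2⟩

lemma isCoboundedUnder_ae_of_abs_le [NeZero μ] (hf : ∀ x, |f x| ≤ M) :
    IsCoboundedUnder (· ≤ ·) (ae μ) f :=
  have := ae_neBot.2 (NeZero.ne μ)
  isCoboundedUnder_le_of_le (ae μ) fun x => (abs_le.1 (hf x)).1

lemma le_essSup_of_forall_le [NeZero μ] (hf : ∀ x, |f x| ≤ M) {b : ℝ} (hb : ∀ x, b ≤ f x) :
    b ≤ essSup f μ := by
  have := ae_neBot.2 (NeZero.ne μ)
  by_contra! h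
  obtain ⟨x, hx⟩ := (ae_lt_of_essSup_lt h (isBoundedUnder_ae_of_abs_le hf)).exists
  exact (hb x).not_gt hx

end EssSup

section Gradient

variable {F : Type*} [NormedAddCommGroup F] [InnerProductSpace ℝ F] [CompleteSpace F]
  {f g : F → ℝ} {x : F}

lemma LipschitzWith.norm_gradient_le {C : ℝ≥0} (hf : LipschitzWith C f) (x : F) :
    ‖gradient f x‖ ≤ C := by
  rw [gradient, LinearIsometryEquiv.norm_map]
  exact norm_fderiv_le_of_lipschitz ℝ hf

lemma gradient_add_of_differentiableAt (hf : DifferentiableAt ℝ f x)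
    (hg : DifferentiableAt ℝ g x) : gradient (f + g) x = gradient f x + gradient g x := by
  simp only [gradient, fderiv_add hf hg, map_add]

lemma gradient_const_smul_of_differentiableAt (c : ℝ) (hf : DifferentiableAt ℝ f x) :
    gradient (c • f) x = c • gradient f x := by
  simp only [gradient, fderiv_const_smul hf c, map_smul]

lemma gradient_inner_add_of_differentiableAt (p : F) (hf : DifferentiableAt ℝ f x) :
    gradient (fun y => ⟪p, y⟫ + f y) x = p + gradient f x := by
  have hp : HasFDerivAt (fun y => ⟪p, y⟫) (innerSL ℝ p) x := (innerSL ℝ p).hasFDerivAt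
  refine ext_inner_right ℝ fun v => ?_
  rw [inner_gradient_left, fderiv_fun_add hp.differentiableAt hf, inner_add_left,
    inner_gradient_left, real_inner_comm]
  simp [hp.fderiv, real_inner_comm]

end Gradient

section Descent

variable {E : Type*} [NormedAddCommGroup E] [NormedSpace ℝ E] {C : ℝ≥0} {w : E → ℝ}

lemma LipschitzWith.comp_add_smul (hw : LipschitzWith C w) (x e : E) :
    LipschitzWith (C * ‖e‖₊) (fun t : ℝ => w (x + t • e)) := by
  refine LipschitzWith.of_dist_le_mul fun t t' => ?_
  calc dist (w (x + t • e)) (w (x + t' • e)) ≤ C * dist (x + t • e) (x + t' • e) :=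
        hw.dist_le_mul _ _
    _ = C * ‖e‖ * dist t t' := by
        rw [dist_add_left, dist_eq_norm, ← sub_smul, norm_smul, Real.dist_eq, Real.norm_eq_abs]
        ring
    _ = _ := by push_cast; rfl

variable [FiniteDimensional ℝ E] [MeasurableSpace E] [BorelSpace E] {μ : Measure E}
  [μ.IsAddHaarMeasure] {s : Set E}

theorem LipschitzWith.hasDerivAt_setIntegral_comp_add_smul (hw : LipschitzWith C w)
    (hs : IsCompact s) (e : E) (t : ℝ) :
    Integrable (fun x => fderiv ℝ w (x + t • e) e) (μ.restrict s) ∧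
      HasDerivAt (fun t => ∫ x in s, w (x + t • e) ∂μ)
        (∫ x in s, fderiv ℝ w (x + t • e) e ∂μ) t := by
  have hcont : ∀ t : ℝ, Continuous fun x => w (x + t • e) := fun t =>
    hw.continuous.comp (continuous_add_const _)
  have hdiff : ∀ᵐ x ∂μ, DifferentiableAt ℝ w (x + t • e) :=
    (measurePreserving_add_right μ (t • e)).quasiMeasurePreserving.ae hw.ae_differentiableAt
  refine hasDerivAt_integral_of_dominated_loc_of_lip (bound := fun _ => ((C * ‖e‖₊ : ℝ≥0) : ℝ))
    univ_mem (.of_forall fun t => (hcont t).aestronglyMeasurable)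
    ((hcont t).continuousOn.integrableOn_compact hs)
    ((measurable_fderiv_apply_const ℝ w e).comp (measurable_add_const _)).aestronglyMeasurable
    (.of_forall fun x => by simpa using hw.comp_add_smul x e)
    (integrableOn_const hs.measure_lt_top.ne) (ae_restrict_of_ae ?_)
  filter_upwards [hdiff] with x hx
  have hline : HasDerivAt (fun t : ℝ => x + t • e) e t := by
    simpa using ((hasDerivAt_id t).smul_const e).const_add x
  exact hx.hasFDerivAt.comp_hasDerivAt t hline

theorem LipschitzWith.exists_sub_le_of_ae_fderiv_le (hw : LipschitzWith C w) (hs : IsCompact s)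
    (hs₀ : μ s ≠ 0) {e : E} {c : ℝ} (hc : ∀ᵐ y ∂μ, fderiv ℝ w y e ≤ -c) {T : ℝ} (hT : 0 ≤ T) :
    ∃ x ∈ s, w (x + T • e) - w x ≤ -(c * T) := by
  set g : ℝ → ℝ := fun t => ∫ x in s, w (x + t • e) ∂μ
  have hs_fin : μ s ≠ ⊤ := hs.measure_lt_top.ne
  have hV : 0 < μ.real s := ENNReal.toReal_pos hs₀ hs_fin
  have hint : ∀ t : ℝ, IntegrableOn (fun x => w (x + t • e)) s μ := fun t =>
    (hw.continuous.comp (continuous_add_const _)).continuousOn.integrableOn_compact hs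
  have hg' : ∀ t, deriv g t ≤ -c * μ.real s := fun t => by
    obtain ⟨hint', hderiv⟩ := hw.hasDerivAt_setIntegral_comp_add_smul (μ := μ) hs e t
    have hc' : ∀ᵐ x ∂μ, fderiv ℝ w (x + t • e) e ≤ -c :=
      (measurePreserving_add_right μ (t • e)).quasiMeasurePreserving.ae hc
    rw [hderiv.deriv]
    calc ∫ x in s, fderiv ℝ w (x + t • e) e ∂μ ≤ ∫ x in s, -c ∂μ :=
          integral_mono_ae hint' (integrableOn_const hs_fin) (ae_restrict_of_ae hc')
      _ = -c * μ.real s := by rw [setIntegral_const, smul_eq_mul, mul_comm]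
  have hgT : g T - g 0 ≤ -c * μ.real s * (T - 0) :=
    image_sub_le_mul_sub_of_deriv_le
      (fun t => (hw.hasDerivAt_setIntegral_comp_add_smul hs e t).2.differentiableAt) hg' hT
  have hint₀ : IntegrableOn w s μ := hw.continuous.continuousOn.integrableOn_compact hs
  obtain ⟨x, hxs, hx⟩ := exists_le_setAverage hs₀ hs_fin ((hint T).sub hint₀)
  refine ⟨x, hxs, hx.trans ?_⟩
  rw [setAverage_eq, integral_sub' (hint T) hint₀, smul_eq_mul, inv_mul_le_iff₀ hV]
  simp only [g, zero_smul, add_zero, sub_zero] at hgT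
  linarith

end Descent

section CorrectorClasses

variable {d : ℕ} {w : Ed d → ℝ}

lemma neg_mem_LipFuns (hw : w ∈ LipFuns d) : -w ∈ LipFuns d :=
  let ⟨C, hC⟩ := hw; ⟨C, hC.neg⟩

lemma neg_mem_SLplus_iff : -w ∈ SLplus d ↔ w ∈ SLminus d := by
  have hlip : -w ∈ LipFuns d ↔ w ∈ LipFuns d :=
    ⟨fun h => by simpa using neg_mem_LipFuns h, neg_mem_LipFuns⟩
  simp only [SLplus, SLminus, Set.mem_ofPred_eq, hlip, Pi.neg_apply, neg_div, neg_le_neg_iff]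

lemma zero_mem_SLplus : (0 : Ed d → ℝ) ∈ SLplus d :=
  ⟨⟨0, LipschitzWith.const' 0⟩, fun ε hε => ⟨0, fun y _ => by simpa using hε.le⟩⟩

lemma zero_mem_SLminus : (0 : Ed d → ℝ) ∈ SLminus d :=
  neg_mem_SLplus_iff.1 (by simpa using zero_mem_SLplus)

lemma convex_LipFuns : Convex ℝ (LipFuns d) := by
  rintro w₁ ⟨C₁, h₁⟩ w₂ ⟨C₂, h₂⟩ a b - - -
  exact ⟨_, ((lipschitzWith_smul a).comp h₁).add ((lipschitzWith_smul b).comp h₂)⟩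

lemma convex_SLplus : Convex ℝ (SLplus d) := by
  rintro w₁ ⟨hl₁, h₁⟩ w₂ ⟨hl₂, h₂⟩ a b ha hb hab
  refine ⟨convex_LipFuns hl₁ hl₂ ha hb hab, fun ε hε => ?_⟩
  obtain ⟨R₁, hR₁⟩ := h₁ ε hε
  obtain ⟨R₂, hR₂⟩ := h₂ ε hε
  refine ⟨max R₁ R₂, fun y hy => ?_⟩
  have e₁ := mul_le_mul_of_nonneg_left (hR₁ y (le_of_max_le_left hy)) ha
  have e₂ := mul_le_mul_of_nonneg_left (hR₂ y (le_of_max_le_right hy)) hb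
  simp only [Pi.add_apply, Pi.smul_apply, smul_eq_mul, add_div, mul_div_assoc]
  linear_combination e₁ + e₂ + ε * hab

lemma convex_SLminus : Convex ℝ (SLminus d) := by
  intro w₁ h₁ w₂ h₂ a b ha hb hab
  rw [← neg_mem_SLplus_iff] at h₁ h₂ ⊢
  rw [neg_add, ← smul_neg, ← smul_neg]
  exact convex_SLplus h₁ h₂ ha hb hab

structure IsCorrectorClass (W : Set (Ed d → ℝ)) : Prop where
  subset_lipFuns : W ⊆ LipFuns d
  zero_mem : (0 : Ed d → ℝ) ∈ W
  convex : Convex ℝ W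

lemma isCorrectorClass_SLplus : IsCorrectorClass (SLplus d) :=
  ⟨fun _ hw => hw.1, zero_mem_SLplus, convex_SLplus⟩

lemma isCorrectorClass_SLminus : IsCorrectorClass (SLminus d) :=
  ⟨fun _ hw => hw.1, zero_mem_SLminus, convex_SLminus⟩

lemma isCorrectorClass_Scal : IsCorrectorClass (Scal d) :=
  ⟨fun _ hw => hw.1.1, ⟨zero_mem_SLplus, zero_mem_SLminus⟩, convex_SLplus.inter convex_SLminus⟩

lemma exists_neg_mul_norm_le_of_mem_SLplus (hw : w ∈ SLplus d) {ε : ℝ} (hε : 0 < ε) :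
    ∃ R, ∀ y, R ≤ ‖y‖ → -(ε * ‖y‖) ≤ w y := by
  obtain ⟨R, hR⟩ := hw.2 ε hε
  refine ⟨max R 1, fun y hy => ?_⟩
  have hy₀ : 0 < ‖y‖ := one_pos.trans_le ((le_max_right _ _).trans hy)
  simpa [le_div_iff₀ hy₀] using hR y ((le_max_left _ _).trans hy)

/-- Descending at a uniform rate along a line would make `w` decrease linearly at infinity. -/
theorem not_ae_fderiv_le_of_mem_SLplus (hw : w ∈ SLplus d) {e : Ed d} (he : ‖e‖ = 1) {c : ℝ}
    (hc : 0 < c) : ¬ ∀ᵐ y, fderiv ℝ w y e ≤ -c := by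
  intro hdesc
  obtain ⟨C, hC⟩ := hw.1
  obtain ⟨R, hR⟩ := exists_neg_mul_norm_le_of_mem_SLplus hw (half_pos hc)
  set A := |w 0| + C
  -- large enough that the drop `c * T` beats `A` plus the allowed decay `(c / 2) * (T + 1)`
  set T := max R 0 + 2 * A / c + 2
  have hA : 0 ≤ A := by positivity
  have hT : 0 ≤ T := by positivity
  obtain ⟨x, hx, hxT⟩ := hC.exists_sub_le_of_ae_fderiv_le (isCompact_closedBall 0 1)
    (Metric.measure_closedBall_pos volume 0 one_pos).ne' hdesc hT
  rw [mem_closedBall_zero_iff] at hx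
  have hTe : ‖T • e‖ = T := by rw [norm_smul, he, mul_one, Real.norm_of_nonneg hT]
  have hy_le : ‖x + T • e‖ ≤ T + 1 := (norm_add_le _ _).trans (by linarith)
  have hy_ge : T - 1 ≤ ‖x + T • e‖ := by
    have := norm_sub_le (x + T • e) x
    rw [add_sub_cancel_left, hTe] at this
    linarith
  have hwx : w x ≤ |w 0| + C := by
    have := hC.dist_le_mul x 0
    rw [Real.dist_eq, dist_zero_right] at this
    linarith [le_abs_self (w x - w 0), le_abs_self (w 0), mul_le_of_le_one_right C.coe_nonneg hx]
  have hlow := hR (x + T • e)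
    (by linarith [le_max_left R 0, div_nonneg (mul_nonneg zero_le_two hA) hc.le])
  have hcT : 2 * A + 2 * c ≤ c * T := by
    have : c * (2 * A / c) = 2 * A := by field_simp
    nlinarith [le_max_right R 0]
  nlinarith [mul_le_mul_of_nonneg_left hy_le (half_pos hc).le]

theorem not_ae_fderiv_le_of_mem_SLminus (hw : w ∈ SLminus d) {e : Ed d} (he : ‖e‖ = 1) {c : ℝ}
    (hc : 0 < c) : ¬ ∀ᵐ y, fderiv ℝ w y e ≤ -c := by
  simpa [fderiv_neg] using not_ae_fderiv_le_of_mem_SLplus (neg_mem_SLplus_iff.2 hw) (e := -e)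
    (by rwa [norm_neg]) hc

end CorrectorClasses

section EffectiveHamiltonian

variable {d : ℕ}

def BddOnBalls (H : Ed d → Ed d → ℝ) : Prop :=
  ∀ R : ℝ, 0 < R → ∃ M : ℝ, ∀ p y : Ed d, ‖p‖ ≤ R → |H p y| ≤ M

def UnifContOnBalls (H : Ed d → Ed d → ℝ) : Prop :=
  ∀ R : ℝ, 0 < R → ∀ ε : ℝ, 0 < ε → ∃ δ : ℝ, 0 < δ ∧ ∀ p p' y y' : Ed d,
    ‖p‖ ≤ R → ‖p'‖ ≤ R → ‖p - p'‖ < δ → ‖y - y'‖ < δ → |H p y - H p' y'| < ε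

def Coercive (H : Ed d → Ed d → ℝ) : Prop :=
  ∀ M : ℝ, ∃ R : ℝ, ∀ p y : Ed d, R ≤ ‖p‖ → M ≤ H p y

def correctorCost (H : Ed d → Ed d → ℝ) (p : Ed d) (w : Ed d → ℝ) : ℝ :=
  essSup (fun y => H (p + gradient w y) y) volume

/-- `HbarPlus`, `HbarMinus` and `Hhat` are `effHam H W` for `W = SLplus d, SLminus d, Scal d`. -/
def effHam (H : Ed d → Ed d → ℝ) (W : Set (Ed d → ℝ)) (p : Ed d) : ℝ :=
  sInf {t | ∃ w ∈ W, t = correctorCost H p w}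

variable {H : Ed d → Ed d → ℝ} {W : Set (Ed d → ℝ)} {p : Ed d} {w : Ed d → ℝ}

lemma Coercive.exists_lower_bound (hcoer : Coercive H) (hH : BddOnBalls H) :
    ∃ B, ∀ p y, B ≤ H p y := by
  obtain ⟨R, hR⟩ := hcoer 0
  obtain ⟨M, hM⟩ := hH (max R 1) (by positivity)
  refine ⟨min 0 (-M), fun p y => ?_⟩
  rcases le_or_gt ‖p‖ (max R 1) with hp | hp
  · exact (min_le_right _ _).trans (neg_le_of_abs_le (hM p y hp))
  · exact (min_le_left _ _).trans (hR p y ((le_max_left _ _).trans hp.le))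

lemma BddOnBalls.bddAbove_range (hH : BddOnBalls H) (p : Ed d) : BddAbove (Set.range (H p)) := by
  obtain ⟨M, hM⟩ := hH (‖p‖ + 1) (by positivity)
  exact ⟨M, by rintro _ ⟨y, rfl⟩; exact (abs_le.1 (hM p y (by linarith))).2⟩

lemma BddOnBalls.exists_abs_le (hH : BddOnBalls H) (hw : w ∈ LipFuns d) (p : Ed d) :
    ∃ M, ∀ y, |H (p + gradient w y) y| ≤ M := by
  obtain ⟨C, hC⟩ := hw
  obtain ⟨M, hM⟩ := hH (‖p‖ + C + 1) (by positivity)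
  refine ⟨M, fun y => hM _ y ?_⟩
  linarith [norm_add_le p (gradient w y), hC.norm_gradient_le y]

lemma effHam_le_correctorCost (hcoer : Coercive H) (hH : BddOnBalls H) (hW : W ⊆ LipFuns d)
    (hw : w ∈ W) : effHam H W p ≤ correctorCost H p w := by
  obtain ⟨B, hB⟩ := hcoer.exists_lower_bound hH
  refine csInf_le ⟨B, ?_⟩ ⟨w, hw, rfl⟩
  rintro _ ⟨v, hv, rfl⟩
  obtain ⟨M, hM⟩ := hH.exists_abs_le (hW hv) p
  exact le_essSup_of_forall_le hM fun y => hB _ y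

lemma le_effHam (h0 : (0 : Ed d → ℝ) ∈ W) {a : ℝ} (h : ∀ w ∈ W, a ≤ correctorCost H p w) :
    a ≤ effHam H W p :=
  le_csInf ⟨_, 0, h0, rfl⟩ (by rintro _ ⟨w, hw, rfl⟩; exact h w hw)

lemma exists_correctorCost_lt (h0 : (0 : Ed d → ℝ) ∈ W) {a : ℝ} (h : effHam H W p < a) :
    ∃ w ∈ W, correctorCost H p w < a := by
  obtain ⟨_, ⟨w, hw, rfl⟩, hlt⟩ := exists_lt_of_csInf_lt
    (⟨_, 0, h0, rfl⟩ : {t | ∃ w ∈ W, t = correctorCost H p w}.Nonempty) h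
  exact ⟨w, hw, hlt⟩

lemma effHam_le_effHam_of_subset (hcoer : Coercive H) (hH : BddOnBalls H) {V : Set (Ed d → ℝ)}
    (hV : V ⊆ LipFuns d) (hWV : W ⊆ V) (h0 : (0 : Ed d → ℝ) ∈ W) (p : Ed d) :
    effHam H V p ≤ effHam H W p :=
  le_effHam h0 fun _ hw => effHam_le_correctorCost hcoer hH hV (hWV hw)

lemma effHam_le_of_forall_le (hcoer : Coercive H) (hH : BddOnBalls H) (hW : IsCorrectorClass W)
    {M : ℝ} (hM : ∀ y, H p y ≤ M) : effHam H W p ≤ M := by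
  refine (effHam_le_correctorCost hcoer hH hW.subset_lipFuns hW.zero_mem).trans ?_
  obtain ⟨M', hM'⟩ := hH.exists_abs_le (hW.subset_lipFuns hW.zero_mem) p
  refine essSup_le_of_ae_le M (.of_forall fun y => ?_) (isCoboundedUnder_ae_of_abs_le hM')
  simpa [Pi.zero_def] using hM y

end EffectiveHamiltonian

section Properties

variable {d : ℕ} {H : Ed d → Ed d → ℝ} {W : Set (Ed d → ℝ)}

/-- Coercivity confines `p₁ + Dw` a.e. to a ball on which `H` is uniformly continuous. -/
lemma exists_correctorCost_le_add (hcoer : Coercive H) (huc : UnifContOnBalls H)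
    (hH : BddOnBalls H) (L : ℝ) {ε : ℝ} (hε : 0 < ε) :
    ∃ δ > 0, ∀ p₁ p₂ : Ed d, ∀ w ∈ LipFuns d, ‖p₁ - p₂‖ < δ → correctorCost H p₁ w < L →
      correctorCost H p₂ w ≤ correctorCost H p₁ w + ε := by
  obtain ⟨R, hR⟩ := hcoer L
  obtain ⟨δ, hδ, hδH⟩ := huc (max R 0 + 1) (by positivity) ε hε
  refine ⟨min δ 1, by positivity, fun p₁ p₂ w hw hp hL => ?_⟩
  obtain ⟨M₁, hM₁⟩ := hH.exists_abs_le hw p₁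
  obtain ⟨M₂, hM₂⟩ := hH.exists_abs_le hw p₂
  unfold correctorCost at hL ⊢
  refine essSup_le_of_ae_le _ ?_ (isCoboundedUnder_ae_of_abs_le hM₂)
  filter_upwards [ae_lt_of_essSup_lt hL (isBoundedUnder_ae_of_abs_le hM₁),
    ae_le_essSup (isBoundedUnder_ae_of_abs_le hM₁)] with y hyL hy
  have h₁ : ‖p₁ + gradient w y‖ < max R 0 := by
    by_contra! h
    exact (hR _ y ((le_max_left _ _).trans h)).not_gt hyL
  have h₂ : ‖p₂ + gradient w y‖ ≤ max R 0 + 1 := by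
    have := norm_sub_le (p₁ + gradient w y) (p₁ - p₂)
    rw [add_sub_sub_cancel, add_comm] at this
    linarith [min_le_right δ 1]
  have hclose := hδH (p₂ + gradient w y) (p₁ + gradient w y) y y h₂ (by linarith)
    (by rw [add_sub_add_right_eq_sub, norm_sub_rev]; exact hp.trans_le (min_le_left _ _))
    (by simpa using hδ)
  linarith [abs_lt.1 hclose]


lemma exists_effHam_lt_add (hcoer : Coercive H) (huc : UnifContOnBalls H) (hH : BddOnBalls H)
    (hW : IsCorrectorClass W) (L : ℝ) {ε : ℝ} (hε : 0 < ε) :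
    ∃ δ > 0, ∀ p₁ p₂ : Ed d, ‖p₁ - p₂‖ < δ → effHam H W p₁ < L →
      effHam H W p₂ < effHam H W p₁ + ε := by
  obtain ⟨δ, hδ, hcost⟩ := exists_correctorCost_le_add hcoer huc hH L (half_pos hε)
  refine ⟨δ, hδ, fun p₁ p₂ hp hL => ?_⟩
  obtain ⟨w, hw, hwlt⟩ := exists_correctorCost_lt hW.zero_mem
    (lt_min hL (lt_add_of_pos_right (effHam H W p₁) (half_pos hε)))
  calc effHam H W p₂ ≤ correctorCost H p₂ w :=
        effHam_le_correctorCost hcoer hH hW.subset_lipFuns hw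
    _ ≤ correctorCost H p₁ w + ε / 2 :=
        hcost p₁ p₂ w (hW.subset_lipFuns hw) hp (hwlt.trans_le (min_le_left _ _))
    _ < effHam H W p₁ + ε := by linarith [hwlt.trans_le (min_le_right _ _)]

theorem continuous_effHam (hcoer : Coercive H) (huc : UnifContOnBalls H) (hH : BddOnBalls H)
    (hW : IsCorrectorClass W) : Continuous (effHam H W) := by
  refine Metric.continuous_iff.2 fun p ε hε => ?_
  obtain ⟨M, hM⟩ := hH (‖p‖ + 1) (by positivity)
  have hbdd : ∀ q, dist q p < 1 → effHam H W q < M + 1 := fun q hq => by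
    have hq' : ‖q‖ ≤ ‖p‖ + 1 := by
      linarith [norm_sub_norm_le q p, dist_eq_norm q p]
    exact (effHam_le_of_forall_le hcoer hH hW fun y => (abs_le.1 (hM q y hq')).2).trans_lt
      (lt_add_one M)
  obtain ⟨δ, hδ, hclose⟩ := exists_effHam_lt_add hcoer huc hH hW (M + 1) hε
  refine ⟨min δ 1, by positivity, fun q hq => ?_⟩
  have hqδ : ‖q - p‖ < δ := (dist_eq_norm q p ▸ hq).trans_le (min_le_left _ _)
  have hq1 : dist q p < 1 := hq.trans_le (min_le_right _ _)
  rw [Real.dist_eq, abs_sub_lt_iff]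
  constructor
  · exact sub_lt_iff_lt_add'.2 (hclose p q (by rwa [norm_sub_rev]) (hbdd p (by simp)))
  · exact sub_lt_iff_lt_add'.2 (hclose q p hqδ (hbdd q hq1))

theorem effHam_coercive (hcoer : Coercive H) (hH : BddOnBalls H) (hW : IsCorrectorClass W)
    (hdesc : ∀ w ∈ W, ∀ e : Ed d, ‖e‖ = 1 → ∀ c : ℝ, 0 < c → ¬ ∀ᵐ y, fderiv ℝ w y e ≤ -c)
    (M : ℝ) : ∃ R, ∀ p, R ≤ ‖p‖ → M ≤ effHam H W p := by
  obtain ⟨R, hR⟩ := hcoer M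
  refine ⟨max R 0 + 1, fun p hp => le_effHam hW.zero_mem fun w hw => ?_⟩
  by_contra! hlt
  have hp₀ : 0 < ‖p‖ := by linarith [le_max_right R 0]
  have he : ‖‖p‖⁻¹ • p‖ = 1 := norm_smul_inv_norm (norm_pos_iff.1 hp₀)
  obtain ⟨Mw, hMw⟩ := hH.exists_abs_le (hW.subset_lipFuns hw) p
  refine hdesc w hw _ he (‖p‖ - max R 0) (by linarith) ?_
  filter_upwards [ae_lt_of_essSup_lt hlt (isBoundedUnder_ae_of_abs_le hMw)] with y hy
  have hsmall : ‖p + gradient w y‖ < max R 0 := by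
    by_contra! h
    exact (hR _ y ((le_max_left _ _).trans h)).not_gt hy
  have hinner := real_inner_le_norm (p + gradient w y) (‖p‖⁻¹ • p)
  rw [he, mul_one, inner_add_left, inner_gradient_left, real_inner_smul_right,
    real_inner_self_eq_norm_sq] at hinner
  have : ‖p‖⁻¹ * ‖p‖ ^ 2 = ‖p‖ := by field_simp
  linarith


lemma correctorCost_midpoint_le (hH : BddOnBalls H) {Λ : ℝ → ℝ → ℝ}
    (hΛmono : ∀ a b a' b' : ℝ, a ≤ a' → b ≤ b' → Λ a b ≤ Λ a' b')
    (hsqc : ∀ p q y : Ed d, H ((1/2 : ℝ) • (p + q)) y ≤ Λ (H p y) (H q y))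
    {w₁ w₂ : Ed d → ℝ} (hw₁ : w₁ ∈ LipFuns d) (hw₂ : w₂ ∈ LipFuns d) (p q : Ed d) :
    correctorCost H ((1/2 : ℝ) • (p + q)) ((1/2 : ℝ) • w₁ + (1/2 : ℝ) • w₂) ≤
      Λ (correctorCost H p w₁) (correctorCost H q w₂) := by
  have hw : (1/2 : ℝ) • w₁ + (1/2 : ℝ) • w₂ ∈ LipFuns d :=
    convex_LipFuns hw₁ hw₂ (by norm_num) (by norm_num) (by norm_num)
  obtain ⟨M, hM⟩ := hH.exists_abs_le hw ((1/2 : ℝ) • (p + q))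
  obtain ⟨M₁, hM₁⟩ := hH.exists_abs_le hw₁ p
  obtain ⟨M₂, hM₂⟩ := hH.exists_abs_le hw₂ q
  obtain ⟨C₁, hC₁⟩ := hw₁
  obtain ⟨C₂, hC₂⟩ := hw₂
  refine essSup_le_of_ae_le _ ?_ (isCoboundedUnder_ae_of_abs_le hM)
  filter_upwards [hC₁.ae_differentiableAt, hC₂.ae_differentiableAt,
    ae_le_essSup (isBoundedUnder_ae_of_abs_le hM₁),
    ae_le_essSup (isBoundedUnder_ae_of_abs_le hM₂)] with y hd₁ hd₂ hb₁ hb₂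
  rw [gradient_add_of_differentiableAt (hd₁.const_smul _) (hd₂.const_smul _),
    gradient_const_smul_of_differentiableAt _ hd₁, gradient_const_smul_of_differentiableAt _ hd₂]
  have hmid : (1/2 : ℝ) • (p + q) + ((1/2 : ℝ) • gradient w₁ y + (1/2 : ℝ) • gradient w₂ y) =
      (1/2 : ℝ) • ((p + gradient w₁ y) + (q + gradient w₂ y)) := by module
  rw [hmid]
  exact (hsqc _ _ y).trans (hΛmono _ _ _ _ hb₁ hb₂)

theorem effHam_midpoint_le (hcoer : Coercive H) (hH : BddOnBalls H) (hW : IsCorrectorClass W)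
    {Λ : ℝ → ℝ → ℝ} (hΛcont : Continuous fun m : ℝ × ℝ => Λ m.1 m.2)
    (hΛmono : ∀ a b a' b' : ℝ, a ≤ a' → b ≤ b' → Λ a b ≤ Λ a' b')
    (hsqc : ∀ p q y : Ed d, H ((1/2 : ℝ) • (p + q)) y ≤ Λ (H p y) (H q y)) (p q : Ed d) :
    effHam H W ((1/2 : ℝ) • (p + q)) ≤ Λ (effHam H W p) (effHam H W q) := by
  have hnear : ∀ η > 0,
      effHam H W ((1/2 : ℝ) • (p + q)) ≤ Λ (effHam H W p + η) (effHam H W q + η) := by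
    intro η hη
    obtain ⟨w₁, hw₁, h₁⟩ := exists_correctorCost_lt hW.zero_mem (lt_add_of_pos_right _ hη)
    obtain ⟨w₂, hw₂, h₂⟩ := exists_correctorCost_lt hW.zero_mem (lt_add_of_pos_right _ hη)
    calc effHam H W ((1/2 : ℝ) • (p + q))
        ≤ correctorCost H ((1/2 : ℝ) • (p + q)) ((1/2 : ℝ) • w₁ + (1/2 : ℝ) • w₂) :=
          effHam_le_correctorCost hcoer hH hW.subset_lipFuns
            (hW.convex hw₁ hw₂ (by norm_num) (by norm_num) (by norm_num))
      _ ≤ Λ (correctorCost H p w₁) (correctorCost H q w₂) :=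
          correctorCost_midpoint_le hH hΛmono hsqc (hW.subset_lipFuns hw₁)
            (hW.subset_lipFuns hw₂) p q
      _ ≤ Λ (effHam H W p + η) (effHam H W q + η) := hΛmono _ _ _ _ h₁.le h₂.le
  have hlim : Tendsto (fun η => Λ (effHam H W p + η) (effHam H W q + η)) (𝓝[>] 0)
      (𝓝 (Λ (effHam H W p) (effHam H W q))) := by
    have hcont : Continuous fun η : ℝ => Λ (effHam H W p + η) (effHam H W q + η) :=
      hΛcont.comp (by fun_prop : Continuous fun η : ℝ => (effHam H W p + η, effHam H W q + η))
    simpa using (hcont.tendsto 0).mono_left nhdsWithin_le_nhds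
  exact ge_of_tendsto hlim (eventually_nhdsWithin_of_forall hnear)

lemma inner_add_mem_LipFuns {w : Ed d → ℝ} (hw : w ∈ LipFuns d) (p : Ed d) :
    (fun y => ⟪p, y⟫ + w y) ∈ LipFuns d :=
  let ⟨_, hC⟩ := hw; ⟨_, (innerSL ℝ p).lipschitz.add hC⟩

lemma correctorCost_zero_inner_add {w : Ed d → ℝ} (hw : w ∈ LipFuns d) (p : Ed d) :
    correctorCost H 0 (fun y => ⟪p, y⟫ + w y) = correctorCost H p w := by
  obtain ⟨C, hC⟩ := hw
  refine essSup_congr_ae ?_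
  filter_upwards [hC.ae_differentiableAt] with y hy
  simp [gradient_inner_add_of_differentiableAt p hy]

theorem Hstar_le_effHam (hcoer : Coercive H) (hH : BddOnBalls H) (hW : IsCorrectorClass W)
    (p : Ed d) : Hstar d H ≤ effHam H W p := by
  have hstar : Hstar d H = effHam H (LipFuns d) 0 := by
    simp only [Hstar, effHam, correctorCost, zero_add]
  rw [hstar]
  refine le_effHam hW.zero_mem fun w hw => ?_
  rw [← correctorCost_zero_inner_add (hW.subset_lipFuns hw) p]
  exact effHam_le_correctorCost hcoer hH subset_rfl
    (inner_add_mem_LipFuns (hW.subset_lipFuns hw) p)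

end Properties

theorem statement_6_general
    (d : ℕ)
    (H : Ed d → Ed d → ℝ)
    (hreg_bdd : ∀ R : ℝ, 0 < R → ∃ M : ℝ, ∀ p y : Ed d, ‖p‖ ≤ R → |H p y| ≤ M)
    (hreg_uc : ∀ R : ℝ, 0 < R → ∀ ε : ℝ, 0 < ε → ∃ δ : ℝ, 0 < δ ∧ ∀ p p' y y' : Ed d,
      ‖p‖ ≤ R → ‖p'‖ ≤ R → ‖p - p'‖ < δ → ‖y - y'‖ < δ → |H p y - H p' y'| < ε)
    (hcoer : ∀ M : ℝ, ∃ R : ℝ, ∀ p y : Ed d, R ≤ ‖p‖ → M ≤ H p y)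
    (Λ : ℝ → ℝ → ℝ)
    (hΛcont : Continuous fun m : ℝ × ℝ => Λ m.1 m.2)
    (hΛmono : ∀ a b a' b' : ℝ, a ≤ a' → b ≤ b' → Λ a b ≤ Λ a' b')
    (hsqc : ∀ p q y : Ed d, H ((1/2 : ℝ) • (p + q)) y ≤ Λ (H p y) (H q y))
    :
    (Continuous (HbarPlus d H) ∧
      (∀ M : ℝ, ∃ R : ℝ, ∀ p : Ed d, R ≤ ‖p‖ → M ≤ HbarPlus d H p) ∧
      (∀ p q : Ed d, HbarPlus d H ((1/2 : ℝ) • (p + q)) ≤ Λ (HbarPlus d H p) (HbarPlus d H q))) ∧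
    (Continuous (HbarMinus d H) ∧
      (∀ M : ℝ, ∃ R : ℝ, ∀ p : Ed d, R ≤ ‖p‖ → M ≤ HbarMinus d H p) ∧
      (∀ p q : Ed d, HbarMinus d H ((1/2 : ℝ) • (p + q)) ≤ Λ (HbarMinus d H p) (HbarMinus d H q))) ∧
    (Continuous (Hhat d H) ∧
      (∀ M : ℝ, ∃ R : ℝ, ∀ p : Ed d, R ≤ ‖p‖ → M ≤ Hhat d H p) ∧
      (∀ p q : Ed d, Hhat d H ((1/2 : ℝ) • (p + q)) ≤ Λ (Hhat d H p) (Hhat d H q))) ∧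
    (∀ p : Ed d,
      Hstar d H ≤ min (HbarPlus d H p) (HbarMinus d H p) ∧
      min (HbarPlus d H p) (HbarMinus d H p) ≤ Hhat d H p ∧
      BddAbove (Set.range fun y : Ed d => H p y) ∧
      Hhat d H p ≤ sSup (Set.range fun y : Ed d => H p y)) := by
  have hclass : ∀ W : Set (Ed d → ℝ), IsCorrectorClass W →
      (∀ w ∈ W, ∀ e : Ed d, ‖e‖ = 1 → ∀ c : ℝ, 0 < c → ¬ ∀ᵐ y, fderiv ℝ w y e ≤ -c) →
      Continuous (effHam H W) ∧ (∀ M : ℝ, ∃ R : ℝ, ∀ p, R ≤ ‖p‖ → M ≤ effHam H W p) ∧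
        ∀ p q, effHam H W ((1/2 : ℝ) • (p + q)) ≤ Λ (effHam H W p) (effHam H W q) :=
    fun W hW hdesc => ⟨continuous_effHam hcoer hreg_uc hreg_bdd hW,
      effHam_coercive hcoer hreg_bdd hW hdesc,
      effHam_midpoint_le hcoer hreg_bdd hW hΛcont hΛmono hsqc⟩
  have hplus := hclass _ isCorrectorClass_SLplus fun w hw _ he _ hc =>
    not_ae_fderiv_le_of_mem_SLplus hw he hc
  have hminus := hclass _ isCorrectorClass_SLminus fun w hw _ he _ hc =>
    not_ae_fderiv_le_of_mem_SLminus hw he hc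
  have hhat := hclass _ isCorrectorClass_Scal fun w hw _ he _ hc =>
    not_ae_fderiv_le_of_mem_SLplus hw.1 he hc
  refine ⟨hplus, hminus, hhat, fun p => ⟨?_, ?_, BddOnBalls.bddAbove_range hreg_bdd p, ?_⟩⟩
  · exact le_min (Hstar_le_effHam hcoer hreg_bdd isCorrectorClass_SLplus p)
      (Hstar_le_effHam hcoer hreg_bdd isCorrectorClass_SLminus p)
  · exact (min_le_left _ _).trans (effHam_le_effHam_of_subset hcoer hreg_bdd
      isCorrectorClass_SLplus.subset_lipFuns Set.inter_subset_left isCorrectorClass_Scal.zero_mem p)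
  · exact effHam_le_of_forall_le hcoer hreg_bdd isCorrectorClass_Scal
      fun y => le_csSup (BddOnBalls.bddAbove_range hreg_bdd p) ⟨y, rfl⟩

/-- basic properties of H̄₊, H̄₋, Ĥ and the chain of inequalities. -/
theorem statement_6
    (d : ℕ) (hd : 0 < d)
    (H : Ed d → Ed d → ℝ)
    (hHcont : Continuous fun q : Ed d × Ed d => H q.1 q.2)
    (hreg_bdd : ∀ R : ℝ, 0 < R → ∃ M : ℝ, ∀ p y : Ed d, ‖p‖ ≤ R → |H p y| ≤ M)
    (hreg_uc : ∀ R : ℝ, 0 < R → ∀ ε : ℝ, 0 < ε → ∃ δ : ℝ, 0 < δ ∧ ∀ p p' y y' : Ed d,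
      ‖p‖ ≤ R → ‖p'‖ ≤ R → ‖p - p'‖ < δ → ‖y - y'‖ < δ → |H p y - H p' y'| < ε)
    (hcoer : ∀ M : ℝ, ∃ R : ℝ, ∀ p y : Ed d, R ≤ ‖p‖ → M ≤ H p y)
    (hqc : ∀ p q y : Ed d, H ((1/2 : ℝ) • (p + q)) y ≤ max (H p y) (H q y))
    (Λ : ℝ → ℝ → ℝ)
    (hΛcont : Continuous fun m : ℝ × ℝ => Λ m.1 m.2)
    (hΛmono : ∀ a b a' b' : ℝ, a ≤ a' → b ≤ b' → Λ a b ≤ Λ a' b')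
    (hΛstrict : ∀ a b : ℝ, a ≠ b → Λ a b < max a b)
    (hsqc : ∀ p q y : Ed d, H ((1/2 : ℝ) • (p + q)) y ≤ Λ (H p y) (H q y))
    :
    (Continuous (HbarPlus d H) ∧
      (∀ M : ℝ, ∃ R : ℝ, ∀ p : Ed d, R ≤ ‖p‖ → M ≤ HbarPlus d H p) ∧
      (∀ p q : Ed d, HbarPlus d H ((1/2 : ℝ) • (p + q)) ≤ Λ (HbarPlus d H p) (HbarPlus d H q))) ∧
    (Continuous (HbarMinus d H) ∧
      (∀ M : ℝ, ∃ R : ℝ, ∀ p : Ed d, R ≤ ‖p‖ → M ≤ HbarMinus d H p) ∧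
      (∀ p q : Ed d, HbarMinus d H ((1/2 : ℝ) • (p + q)) ≤ Λ (HbarMinus d H p) (HbarMinus d H q))) ∧
    (Continuous (Hhat d H) ∧
      (∀ M : ℝ, ∃ R : ℝ, ∀ p : Ed d, R ≤ ‖p‖ → M ≤ Hhat d H p) ∧
      (∀ p q : Ed d, Hhat d H ((1/2 : ℝ) • (p + q)) ≤ Λ (Hhat d H p) (Hhat d H q))) ∧
    (∀ p : Ed d,
      Hstar d H ≤ min (HbarPlus d H p) (HbarMinus d H p) ∧
      min (HbarPlus d H p) (HbarMinus d H p) ≤ Hhat d H p ∧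
      BddAbove (Set.range fun y : Ed d => H p y) ∧
      Hhat d H p ≤ sSup (Set.range fun y : Ed d => H p y)) :=
  statement_6_general d H hreg_bdd hreg_uc hcoer Λ hΛcont hΛmono hsqc
end
end

section
/- For every k > 1 there exists c > 0 such that for all μ, ν with H̄* < ν < μ ≤ k and μ − ν ≥ 1/k, and all x, y ∈ ℝ^d: m_μ(y,x) ≥ m_ν(y,x) + c|x−y|. -/
open MeasureTheory Filter Topology Bornology
open scoped RealInnerProductSpace NNReal

noncomputable section

/-!
If `H(Dw, ·) ≤ ν` a.e., the tilted function `w + ⟪q, ·⟫` with `‖q‖ ≤ c` satisfies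
`H(Dw + q, ·) ≤ ν + 1/k ≤ μ` a.e. as soon as `c` is below the modulus of uniform continuity of `H`
at precision `1/k` on the ball of gradients allowed by coercivity; choosing `q` parallel to `y - x`
gains `c ‖y - x‖`. Passing to suprema needs the `μ`-admissible differences to be bounded, which
follows from the a.e. gradient bound by the mean value inequality for Lipschitz functions whose
derivative is only bounded almost everywhere.
-/

open Metric Set

section LipschitzAverage

variable {E F : Type*} [NormedAddCommGroup E] [MeasurableSpace E] [OpensMeasurableSpace E]
  {μ : Measure E} [IsFiniteMeasureOnCompacts μ] [NormedAddCommGroup F] [NormedSpace ℝ F]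
  [CompleteSpace F] {f : E → F} {K : ℝ≥0} {s : Set E}

theorem LipschitzWith.norm_setIntegral_add_sub_smul_le (hf : LipschitzWith K f) (hs : IsCompact s)
    {ε : ℝ} (hsε : s ⊆ closedBall 0 ε) (a : E) :
    ‖∫ z in s, f (a + z) ∂μ - μ.real s • f a‖ ≤ K * ε * μ.real s := by
  have : IsFiniteMeasure (μ.restrict s) := isFiniteMeasure_restrict.2 hs.measure_lt_top.ne
  have hint : IntegrableOn (fun z => f (a + z)) s μ :=
    (hf.continuous.comp (continuous_const_add a)).continuousOn.integrableOn_compact hs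
  rw [← measureReal_restrict_apply_univ, ← integral_const, ← integral_sub hint (integrable_const _)]
  refine norm_integral_le_of_norm_le_const <|
    ae_restrict_of_forall_mem hs.measurableSet fun z hz => ?_
  calc ‖f (a + z) - f a‖ ≤ K * ‖a + z - a‖ := hf.norm_sub_le _ _
    _ ≤ K * ε := by gcongr; simpa using hsε hz

end LipschitzAverage

section LipschitzAeFDeriv

variable {E F : Type*} [NormedAddCommGroup E] [NormedSpace ℝ E] [FiniteDimensional ℝ E]
  [MeasurableSpace E] [BorelSpace E] {μ : Measure E} [μ.IsAddHaarMeasure]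
  [NormedAddCommGroup F] [NormedSpace ℝ F] [FiniteDimensional ℝ F]
  {f : E → F} {K : ℝ≥0} {s : Set E}

theorem LipschitzWith.ae_differentiableAt_add (hf : LipschitzWith K f) (a : E) :
    ∀ᵐ z ∂μ, DifferentiableAt ℝ f (a + z) :=
  (measurePreserving_add_left μ a).quasiMeasurePreserving.ae hf.ae_differentiableAt

theorem LipschitzWith.hasFDerivAt_setIntegral_add (hf : LipschitzWith K f) (hs : IsCompact s)
    (a : E) :
    HasFDerivAt (fun b => ∫ z in s, f (b + z) ∂μ) (∫ z in s, fderiv ℝ f (a + z) ∂μ) a := by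
  have : IsFiniteMeasure (μ.restrict s) := isFiniteMeasure_restrict.2 hs.measure_lt_top.ne
  have hint (b : E) : IntegrableOn (fun z => f (b + z)) s μ :=
    (hf.continuous.comp (continuous_const_add b)).continuousOn.integrableOn_compact hs
  refine (hasFDerivAt_integral_of_dominated_loc_of_lip (bound := fun _ => (K : ℝ)) univ_mem
    (Eventually.of_forall fun b => (hint b).aestronglyMeasurable) (hint a)
    ((measurable_fderiv ℝ f).comp (measurable_const_add a)).aestronglyMeasurable ?_
    (integrable_const _) ?_).2
  · refine Eventually.of_forall fun z => LipschitzOnWith.mono ?_ (subset_univ _)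
    simpa [Function.comp_def] using hf.comp (isometry_add_right z).lipschitz
  · filter_upwards [ae_restrict_of_ae (hf.ae_differentiableAt_add (μ := μ) a)] with z hz
    exact hz.hasFDerivAt.comp a ((hasFDerivAt_id a).add_const z)

theorem LipschitzWith.norm_setIntegral_add_sub_le (hf : LipschitzWith K f) (hs : IsCompact s)
    {R : ℝ} (hR : ∀ᵐ z ∂μ, ‖fderiv ℝ f z‖ ≤ R) (a b : E) :
    ‖∫ z in s, f (b + z) ∂μ - ∫ z in s, f (a + z) ∂μ‖ ≤ R * μ.real s * ‖b - a‖ := by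
  have : IsFiniteMeasure (μ.restrict s) := isFiniteMeasure_restrict.2 hs.measure_lt_top.ne
  refine convex_univ.norm_image_sub_le_of_norm_hasFDerivWithin_le
    (fun c _ => (hf.hasFDerivAt_setIntegral_add hs c).hasFDerivWithinAt) (fun c _ => ?_)
    (mem_univ a) (mem_univ b)
  rw [← measureReal_restrict_apply_univ]
  exact norm_integral_le_of_norm_le_const <| ae_restrict_of_ae <|
    (measurePreserving_add_left μ c).quasiMeasurePreserving.ae hR

/-- Averaging `f` over small balls gives a `C¹` function to which the mean value inequality
applies, and which is uniformly close to `f`. -/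
theorem LipschitzWith.norm_sub_le_of_ae_norm_fderiv_le (hf : LipschitzWith K f) {R : ℝ}
    (hR : ∀ᵐ z ∂μ, ‖fderiv ℝ f z‖ ≤ R) (x y : E) :
    ‖f y - f x‖ ≤ R * ‖y - x‖ := by
  have key : ∀ ε > 0, ‖f y - f x‖ ≤ R * ‖y - x‖ + 2 * K * ε := by
    intro ε hε
    have hball := isCompact_closedBall (0 : E) ε
    set τ := μ.real (closedBall (0 : E) ε)
    set A := ∫ z in closedBall 0 ε, f (y + z) ∂μ
    set B := ∫ z in closedBall 0 ε, f (x + z) ∂μ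
    have hτ : 0 < τ :=
      ENNReal.toReal_pos (measure_closedBall_pos μ 0 hε).ne' measure_closedBall_lt_top.ne
    have hA : ‖A - τ • f y‖ ≤ K * ε * τ := hf.norm_setIntegral_add_sub_smul_le hball subset_rfl y
    have hB : ‖B - τ • f x‖ ≤ K * ε * τ := hf.norm_setIntegral_add_sub_smul_le hball subset_rfl x
    have hAB : ‖A - B‖ ≤ R * τ * ‖y - x‖ := hf.norm_setIntegral_add_sub_le hball hR x y
    refine le_of_mul_le_mul_left ?_ hτ
    calc τ * ‖f y - f x‖ = ‖τ • (f y - f x)‖ := by rw [norm_smul, Real.norm_of_nonneg hτ.le]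
      _ = ‖(A - B) - (A - τ • f y) + (B - τ • f x)‖ := by rw [smul_sub]; congr 1; abel
      _ ≤ ‖A - B‖ + ‖A - τ • f y‖ + ‖B - τ • f x‖ :=
          (norm_add_le _ _).trans (add_le_add_left (_root_.norm_sub_le _ _) _)
      _ ≤ τ * (R * ‖y - x‖ + 2 * K * ε) := by linarith
  have hlim : Tendsto (fun ε => R * ‖y - x‖ + 2 * K * ε) (𝓝[>] 0) (𝓝 (R * ‖y - x‖)) := by
    exact (Continuous.tendsto' (by fun_prop) 0 _ (by simp)).mono_left nhdsWithin_le_nhds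
  exact ge_of_tendsto hlim (eventually_nhdsWithin_of_forall key)

end LipschitzAeFDeriv

section InnerProduct

variable {F : Type*} [NormedAddCommGroup F] [InnerProductSpace ℝ F]

theorem exists_norm_le_one_inner_eq_norm (v : F) : ∃ u : F, ‖u‖ ≤ 1 ∧ ⟪u, v⟫ = ‖v‖ := by
  rcases eq_or_ne v 0 with rfl | hv
  · exact ⟨0, by simp⟩
  · refine ⟨‖v‖⁻¹ • v, (norm_smul_inv_norm hv).le, ?_⟩
    rw [real_inner_smul_left, real_inner_self_eq_norm_sq]
    field_simp

variable [CompleteSpace F]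

theorem norm_gradient_eq_norm_fderiv (f : F → ℝ) (x : F) : ‖gradient f x‖ = ‖fderiv ℝ f x‖ :=
  (InnerProductSpace.toDual ℝ F).symm.norm_map _

theorem DifferentiableAt.gradient_add_inner {f : F → ℝ} {x : F} (hf : DifferentiableAt ℝ f x)
    (p : F) : gradient (fun z => f z + ⟪p, z⟫) x = gradient f x + p := by
  refine HasGradientAt.gradient ?_
  rw [hasGradientAt_iff_hasFDerivAt, map_add]
  exact hf.hasGradientAt.hasFDerivAt.add (innerSL ℝ p).hasFDerivAt

end InnerProduct

section Hamiltonian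

variable {d : ℕ} {H : Ed d → Ed d → ℝ}

theorem exists_ae_le_of_Hstar_lt
    (hbdd : ∀ R : ℝ, 0 < R → ∃ M : ℝ, ∀ p y : Ed d, ‖p‖ ≤ R → |H p y| ≤ M) {ν : ℝ}
    (hν : Hstar d H < ν) : ∃ w ∈ LipFuns d, ∀ᵐ z ∂volume, H (gradient w z) z ≤ ν := by
  have hne : {t | ∃ w ∈ LipFuns d, t = essSup (fun y => H (gradient w y) y) volume}.Nonempty :=
    ⟨_, fun _ => 0, ⟨0, LipschitzWith.const 0⟩, rfl⟩
  obtain ⟨_, ⟨w, ⟨K, hw⟩, rfl⟩, hlt⟩ := exists_lt_of_csInf_lt hne hν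
  obtain ⟨M, hM⟩ := hbdd (K + 1) (by positivity)
  have hgrad (z : Ed d) : ‖gradient w z‖ ≤ K + 1 := by
    rw [norm_gradient_eq_norm_fderiv]; linarith [norm_fderiv_le_of_lipschitz ℝ hw (x₀ := z)]
  refine ⟨w, ⟨K, hw⟩, (ae_lt_of_essSup_lt hlt ?_).mono fun z hz => hz.le⟩
  exact isBoundedUnder_of ⟨M, fun z => (abs_le.mp (hM _ z (hgrad z))).2⟩

theorem bddAbove_mMu_set {μ R : ℝ} (hR : ∀ p z, H p z ≤ μ → ‖p‖ ≤ R) (y x : Ed d) :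
    BddAbove {t | ∃ w ∈ LipFuns d, (∀ᵐ z ∂volume, H (gradient w z) z ≤ μ) ∧ t = w y - w x} := by
  refine ⟨R * ‖y - x‖, ?_⟩
  rintro _ ⟨w, ⟨K, hw⟩, hwμ, rfl⟩
  have hfderiv : ∀ᵐ z ∂volume, ‖fderiv ℝ w z‖ ≤ R :=
    hwμ.mono fun z hz => norm_gradient_eq_norm_fderiv w z ▸ hR _ z hz
  exact (le_abs_self _).trans (hw.norm_sub_le_of_ae_norm_fderiv_le hfderiv x y)

theorem mMu_add_le_mMu {ν μ a : ℝ} {y x : Ed d}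
    (hne : ∃ w ∈ LipFuns d, ∀ᵐ z ∂volume, H (gradient w z) z ≤ ν)
    (hbdd : BddAbove {t | ∃ w ∈ LipFuns d, (∀ᵐ z ∂volume, H (gradient w z) z ≤ μ) ∧
      t = w y - w x})
    (hlift : ∀ w ∈ LipFuns d, (∀ᵐ z ∂volume, H (gradient w z) z ≤ ν) →
      ∃ v ∈ LipFuns d, (∀ᵐ z ∂volume, H (gradient v z) z ≤ μ) ∧ w y - w x + a ≤ v y - v x) :
    mMu d H ν y x + a ≤ mMu d H μ y x := by
  obtain ⟨w₀, hw₀, hw₀ν⟩ := hne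
  rw [← le_sub_iff_add_le]
  refine csSup_le ⟨_, w₀, hw₀, hw₀ν, rfl⟩ ?_
  rintro _ ⟨w, hw, hwν, rfl⟩
  obtain ⟨v, hv, hvμ, hwv⟩ := hlift w hw hwν
  exact le_sub_iff_add_le.2 (hwv.trans (le_csSup hbdd ⟨v, hv, hvμ, rfl⟩))

theorem ae_H_gradient_add_inner_le {w : Ed d → ℝ} {K : ℝ≥0} (hw : LipschitzWith K w)
    {R δ ε ν : ℝ} (hR : ∀ p z, H p z ≤ ν → ‖p‖ ≤ R)
    (hHδ : ∀ p p' y y' : Ed d, ‖p‖ ≤ R + 1 → ‖p'‖ ≤ R + 1 → ‖p - p'‖ < δ → ‖y - y'‖ < δ →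
      |H p y - H p' y'| < ε)
    {q : Ed d} (hq : ‖q‖ ≤ 1) (hqδ : ‖q‖ < δ) (hwν : ∀ᵐ z ∂volume, H (gradient w z) z ≤ ν) :
    ∀ᵐ z ∂volume, H (gradient (fun z => w z + ⟪q, z⟫) z) z ≤ ν + ε := by
  filter_upwards [hwν, hw.ae_differentiableAt] with z hz hdiff
  have hgrad := hR _ z hz
  rw [hdiff.gradient_add_inner]
  have := hHδ (gradient w z + q) (gradient w z) z z
    ((norm_add_le _ _).trans (by linarith)) (by linarith) (by simpa using hqδ)
    (by simpa using (norm_nonneg q).trans_lt hqδ)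
  linarith [(abs_lt.mp this).2]

end Hamiltonian

theorem statement_10_general
    (d : ℕ)
    (H : Ed d → Ed d → ℝ)
    (hreg_bdd : ∀ R : ℝ, 0 < R → ∃ M : ℝ, ∀ p y : Ed d, ‖p‖ ≤ R → |H p y| ≤ M)
    (hreg_uc : ∀ R : ℝ, 0 < R → ∀ ε : ℝ, 0 < ε → ∃ δ : ℝ, 0 < δ ∧ ∀ p p' y y' : Ed d,
      ‖p‖ ≤ R → ‖p'‖ ≤ R → ‖p - p'‖ < δ → ‖y - y'‖ < δ → |H p y - H p' y'| < ε)
    (hcoer : ∀ M : ℝ, ∃ R : ℝ, ∀ p y : Ed d, R ≤ ‖p‖ → M ≤ H p y)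
    :
    ∀ k : ℝ, 1 < k → ∃ c : ℝ, 0 < c ∧
      ∀ μ ν : ℝ, Hstar d H < ν → ν < μ → μ ≤ k → 1 / k ≤ μ - ν →
        ∀ x y : Ed d, mMu d H ν y x + c * ‖x - y‖ ≤ mMu d H μ y x := by
  intro k hk
  obtain ⟨R₀, hR₀⟩ := hcoer (k + 1)
  set R := max R₀ 0
  have hR {l : ℝ} (hl : l ≤ k) (p z : Ed d) (hp : H p z ≤ l) : ‖p‖ ≤ R :=
    le_max_of_le_left (le_of_not_ge fun h => by linarith [hR₀ p z h])
  obtain ⟨δ, hδ, hHδ⟩ := hreg_uc (R + 1) (by positivity) (1 / k) (by positivity)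
  refine ⟨min (δ / 2) 1, by positivity, fun μ ν hν hνμ hμk hgap x y => ?_⟩
  obtain ⟨u, hu, hux⟩ := exists_norm_le_one_inner_eq_norm (y - x)
  set c := min (δ / 2) 1
  have hq : ‖c • u‖ ≤ c := by
    rw [norm_smul, Real.norm_of_nonneg (by positivity)]
    exact mul_le_of_le_one_right (by positivity) hu
  refine mMu_add_le_mMu (exists_ae_le_of_Hstar_lt hreg_bdd hν) (bddAbove_mMu_set (hR hμk) y x) ?_
  rintro w ⟨K, hw⟩ hwν
  refine ⟨fun z => w z + ⟪c • u, z⟫, ⟨_, hw.add (innerSL ℝ (c • u)).lipschitz⟩, ?_, ?_⟩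
  · refine (ae_H_gradient_add_inner_le hw (hR (by linarith)) hHδ (hq.trans (min_le_right _ _))
      (hq.trans_lt ((min_le_left _ _).trans_lt (by linarith))) hwν).mono fun z hz => ?_
    linarith
  · rw [norm_sub_rev, ← hux]
    simp only [real_inner_smul_left, inner_sub_right]
    linarith

/-- strict monotonicity of μ ↦ m_μ, quantitatively. -/
theorem statement_10
    (d : ℕ) (hd : 0 < d)
    (H : Ed d → Ed d → ℝ)
    (hHcont : Continuous fun q : Ed d × Ed d => H q.1 q.2)
    (hreg_bdd : ∀ R : ℝ, 0 < R → ∃ M : ℝ, ∀ p y : Ed d, ‖p‖ ≤ R → |H p y| ≤ M)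
    (hreg_uc : ∀ R : ℝ, 0 < R → ∀ ε : ℝ, 0 < ε → ∃ δ : ℝ, 0 < δ ∧ ∀ p p' y y' : Ed d,
      ‖p‖ ≤ R → ‖p'‖ ≤ R → ‖p - p'‖ < δ → ‖y - y'‖ < δ → |H p y - H p' y'| < ε)
    (hcoer : ∀ M : ℝ, ∃ R : ℝ, ∀ p y : Ed d, R ≤ ‖p‖ → M ≤ H p y)
    (hqc : ∀ p q y : Ed d, H ((1/2 : ℝ) • (p + q)) y ≤ max (H p y) (H q y))
    (Λ : ℝ → ℝ → ℝ)
    (hΛcont : Continuous fun m : ℝ × ℝ => Λ m.1 m.2)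
    (hΛmono : ∀ a b a' b' : ℝ, a ≤ a' → b ≤ b' → Λ a b ≤ Λ a' b')
    (hΛstrict : ∀ a b : ℝ, a ≠ b → Λ a b < max a b)
    (hsqc : ∀ p q y : Ed d, H ((1/2 : ℝ) • (p + q)) y ≤ Λ (H p y) (H q y))
    :
    ∀ k : ℝ, 1 < k → ∃ c : ℝ, 0 < c ∧
      ∀ μ ν : ℝ, Hstar d H < ν → ν < μ → μ ≤ k → 1 / k ≤ μ - ν →
        ∀ x y : Ed d, mMu d H ν y x + c * ‖x - y‖ ≤ mMu d H μ y x :=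
  statement_10_general d H hreg_bdd hreg_uc hcoer
end
end

section
/- Let μ > H̄* and w ∈ 𝓛. Then w(y) − w(x) ≤ m_μ(y,x) for every x, y ∈ ℝ^d if and only if H(Dw(y), y) ≤ μ for almost every y ∈ ℝ^d. -/
open MeasureTheory Filter Topology Bornology
open scoped RealInnerProductSpace NNReal

noncomputable section

/-!
Let `z₀` be a point of differentiability of `w`. Quasiconvexity makes the sublevel set
`K = {q | H q z₀ ≤ μ + ε}` closed and convex, and uniform continuity in `y` puts the gradient of
every subsolution into `K` almost everywhere near `z₀`. If `Dw(z₀) ∉ K`, take `v` and `s` with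
`⟪q, v⟫ < s < ⟪Dw(z₀), v⟫` for `q ∈ K`. Integrating along segments, every subsolution `u`
satisfies `u (z₀ + t • v) - u z₀ ≤ t * s` for small `t > 0`; by domination so does `w`, which
contradicts the value of its derivative in direction `v`. Conversely, coercivity bounds the
gradients of subsolutions, so the supremum defining `m_μ` is finite, and `w` is one of the
competitors.
-/

open Set Metric

theorem LipschitzWith.sub_le_of_ae_deriv_le {g : ℝ → ℝ} {C : ℝ≥0} (hg : LipschitzWith C g)
    {a b c : ℝ} (hab : a ≤ b) (h : ∀ᵐ t, t ∈ Icc a b → deriv g t ≤ c) :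
    g b - g a ≤ c * (b - a) := by
  have hac := (hg.lipschitzOnWith (s := uIcc a b)).absolutelyContinuousOnInterval
  rw [← hac.integral_deriv_eq_sub, mul_comm, ← smul_eq_mul, ← intervalIntegral.integral_const]
  exact intervalIntegral.integral_mono_ae_restrict hab hac.intervalIntegrable_deriv
    intervalIntegrable_const ((ae_restrict_iff' measurableSet_Icc).2 h)

theorem ae_ae_add_smul {E : Type*} [NormedAddCommGroup E] [NormedSpace ℝ E] [MeasurableSpace E]
    [BorelSpace E] [SecondCountableTopology E] (μ : Measure E) [SFinite μ] [μ.IsAddLeftInvariant]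
    {P : E → Prop} (hP : ∀ᵐ z ∂μ, P z) (v : E) :
    ∀ᵐ a ∂μ, ∀ᵐ t : ℝ, P (t • v + a) := by
  have hshear : MeasurePreserving (fun q : ℝ × E => (q.1, q.1 • v + q.2))
      (volume.prod μ) (volume.prod μ) :=
    (MeasurePreserving.id volume).skew_product (by fun_prop)
      (ae_of_all _ fun t => map_add_left_eq_self μ (t • v))
  have h : ∀ᵐ q ∂(volume.prod μ), P (q.1 • v + q.2) :=
    hshear.quasiMeasurePreserving.ae (Measure.quasiMeasurePreserving_snd.ae hP)
  exact Measure.ae_ae_of_ae_prod (Measure.measurePreserving_swap.quasiMeasurePreserving.ae h)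

theorem le_of_ae_le_of_mem_nhds {X Y : Type*} [TopologicalSpace X] [MeasurableSpace X]
    [LinearOrder Y] [TopologicalSpace Y] [OrderTopology Y]
    (μ : Measure X) [μ.IsOpenPosMeasure] {f : X → Y} {x : X} {V : Set X} {c : Y}
    (hf : ContinuousAt f x) (hV : V ∈ 𝓝 x) (h : ∀ᵐ a ∂μ, a ∈ V → f a ≤ c) : f x ≤ c := by
  by_contra! hlt
  have hmem : {a | a ∈ V ∧ c < f a} ∈ 𝓝 x := inter_mem hV (hf.eventually (lt_mem_nhds hlt))
  refine (Measure.measure_pos_of_mem_nhds μ hmem).ne' (measure_mono_null ?_ (ae_iff.1 h))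
  rintro a ⟨haV, hlt⟩ hle
  exact (hle haV).not_gt hlt

theorem IsClosed.Icc_subset_of_midpoint_mem {D : Set ℝ} (hD : IsClosed D) {a b : ℝ}
    (ha : a ∈ D) (hb : b ∈ D) (hmid : ∀ r ∈ D, ∀ s ∈ D, midpoint ℝ r s ∈ D) : Icc a b ⊆ D := by
  rintro t ⟨hat, htb⟩
  by_contra ht
  -- the ends `α < t < β` of the gap of `D` around `t` lie in `D`, but their midpoint cannot
  have hA : IsCompact (D ∩ Icc a t) := isCompact_Icc.inter_left hD
  have hB : IsCompact (D ∩ Icc t b) := isCompact_Icc.inter_left hD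
  obtain ⟨hαD, haα, hαt⟩ := hA.sSup_mem ⟨a, ha, le_rfl, hat⟩
  obtain ⟨hβD, htβ, hβb⟩ := hB.sInf_mem ⟨b, hb, htb, le_rfl⟩
  set α := sSup (D ∩ Icc a t)
  set β := sInf (D ∩ Icc t b)
  have hαt' : α < t := hαt.lt_of_ne fun h => ht (h ▸ hαD)
  have htβ' : t < β := htβ.lt_of_ne fun h => ht (h ▸ hβD)
  have hmD : (α + β) / 2 ∈ D := by
    have hm : midpoint ℝ α β = (α + β) / 2 := by
      rw [midpoint_eq_smul_add, smul_eq_mul, invOf_eq_inv]; ring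
    exact hm ▸ hmid α hαD β hβD
  rcases le_total ((α + β) / 2) t with hle | hle
  · linarith [le_csSup hA.bddAbove ⟨hmD, by linarith, hle⟩]
  · linarith [csInf_le hB.bddBelow ⟨hmD, hle, by linarith⟩]

theorem IsClosed.convex_of_midpoint_mem {E : Type*} [AddCommGroup E] [Module ℝ E]
    [TopologicalSpace E] [IsTopologicalAddGroup E] [ContinuousSMul ℝ E] {S : Set E}
    (hS : IsClosed S) (hmid : ∀ a ∈ S, ∀ b ∈ S, midpoint ℝ a b ∈ S) : Convex ℝ S := by
  refine convex_iff_segment_subset.2 fun a ha b hb => ?_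
  rw [segment_eq_image_lineMap, image_subset_iff]
  refine (hS.preimage AffineMap.lineMap_continuous).Icc_subset_of_midpoint_mem
    (by simpa using ha) (by simpa using hb) fun r hr s hs => ?_
  simpa [mem_preimage, AffineMap.map_midpoint] using hmid _ hr _ hs

section FiniteDimensional

variable {E : Type*} [NormedAddCommGroup E] [NormedSpace ℝ E] [FiniteDimensional ℝ E]
  [MeasurableSpace E] [BorelSpace E] (μ : Measure E) [μ.IsAddHaarMeasure]

theorem LipschitzWith.sub_le_of_ae_fderiv_le {u : E → ℝ} {C : ℝ≥0} (hu : LipschitzWith C u)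
    {U : Set E} (hU : IsOpen U) (hUc : Convex ℝ U) {x y : E} (hx : x ∈ U) (hy : y ∈ U) {c : ℝ}
    (h : ∀ᵐ z ∂μ, z ∈ U → fderiv ℝ u z (y - x) ≤ c) : u y - u x ≤ c := by
  set v := y - x
  -- the bound holds on almost every segment `[a, a + v]` parallel to `[x, y]`, and by
  -- continuity of `a ↦ u (v + a) - u a` on `[x, y]` itself
  have hV : {a | a ∈ U ∧ v + a ∈ U} ∈ 𝓝 x :=
    inter_mem (hU.mem_nhds hx)
      ((hU.preimage (continuous_const.add continuous_id)).mem_nhds (by simpa [v] using hy))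
  have hG : Continuous fun a => u (v + a) - u a :=
    (hu.continuous.comp (continuous_const.add continuous_id)).sub hu.continuous
  have hline : ∀ᵐ a ∂μ, a ∈ {a | a ∈ U ∧ v + a ∈ U} → u (v + a) - u a ≤ c := by
    filter_upwards [ae_ae_add_smul μ (hu.ae_differentiableAt.and h) v] with a ha ⟨haU, hvaU⟩
    have hg : LipschitzWith (C * ‖v‖₊) fun t : ℝ => u (t • v + a) :=
      hu.comp <| LipschitzWith.of_dist_le_mul fun s t => by
        simp [dist_eq_norm, ← sub_smul, norm_smul, mul_comm]
    have hderiv : ∀ᵐ t : ℝ, t ∈ Icc (0 : ℝ) 1 → deriv (fun t : ℝ => u (t • v + a)) t ≤ c := by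
      filter_upwards [ha] with t ⟨hdiff, hle⟩ ht
      have hmem : t • v + a ∈ U := by
        simpa [add_comm] using hUc.add_smul_sub_mem haU hvaU ht
      have haff : HasDerivAt (fun t : ℝ => t • v + a) v t := by
        simpa using ((hasDerivAt_id t).smul_const v).add_const a
      have hg' : HasDerivAt (fun t : ℝ => u (t • v + a)) (fderiv ℝ u (t • v + a) v) t :=
        hdiff.hasFDerivAt.comp_hasDerivAt t haff
      exact hg'.deriv ▸ hle hmem
    simpa using hg.sub_le_of_ae_deriv_le zero_le_one hderiv
  simpa [v] using le_of_ae_le_of_mem_nhds μ hG.continuousAt hV hline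

end FiniteDimensional

section InnerProductSpace

variable {E : Type*} [NormedAddCommGroup E] [InnerProductSpace ℝ E]

theorem LipschitzWith.norm_gradient_le_s11 [CompleteSpace E] {u : E → ℝ} {C : ℝ≥0}
    (hu : LipschitzWith C u) (z : E) : ‖gradient u z‖ ≤ C := by
  rw [gradient, LinearIsometryEquiv.norm_map]
  exact norm_fderiv_le_of_lipschitz ℝ hu

variable [FiniteDimensional ℝ E] [MeasurableSpace E] [BorelSpace E]
  (μ : Measure E) [μ.IsAddHaarMeasure]

theorem LipschitzWith.sub_le_of_ae_norm_gradient_le {u : E → ℝ} {C : ℝ≥0}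
    (hu : LipschitzWith C u) {R : ℝ} (h : ∀ᵐ z ∂μ, ‖gradient u z‖ ≤ R) (x y : E) :
    u y - u x ≤ R * ‖y - x‖ := by
  refine hu.sub_le_of_ae_fderiv_le μ isOpen_univ convex_univ trivial trivial ?_
  filter_upwards [h] with z hz _
  rw [← inner_gradient_left]
  exact (real_inner_le_norm _ _).trans (mul_le_mul_of_nonneg_right hz (norm_nonneg _))

theorem gradient_mem_of_sub_le_sSup {K : Set E} (hK : Convex ℝ K) (hKc : IsClosed K)
    {F : Set (E → ℝ)} (hFne : F.Nonempty) (hFlip : ∀ u ∈ F, ∃ C, LipschitzWith C u)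
    {z₀ : E} {U : Set E} (hU : U ∈ 𝓝 z₀) (hFK : ∀ u ∈ F, ∀ᵐ z ∂μ, z ∈ U → gradient u z ∈ K)
    {w : E → ℝ} (hw : DifferentiableAt ℝ w z₀)
    (hdom : ∀ y, w y - w z₀ ≤ sSup ((fun u => u y - u z₀) '' F)) :
    gradient w z₀ ∈ K := by
  obtain ⟨δ, hδ, hball⟩ := Metric.mem_nhds_iff.1 hU
  by_contra hp
  obtain ⟨f, s, hfK, hsf⟩ := geometric_hahn_banach_closed_point hK hKc hp
  set v := (InnerProductSpace.toDual ℝ E).symm f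
  have hfv : ∀ q, ⟪q, v⟫ = f q := fun q => by
    rw [real_inner_comm]; exact InnerProductSpace.toDual_symm_apply
  have hinc : ∀ u ∈ F, ∀ t : ℝ, 0 ≤ t → z₀ + t • v ∈ ball z₀ δ →
      u (z₀ + t • v) - u z₀ ≤ t * s := by
    intro u hu t ht hmem
    obtain ⟨C, hC⟩ := hFlip u hu
    refine hC.sub_le_of_ae_fderiv_le μ isOpen_ball (convex_ball z₀ δ) (mem_ball_self hδ) hmem ?_
    filter_upwards [hFK u hu] with z hz hzball
    rw [add_sub_cancel_left, map_smul, smul_eq_mul, ← inner_gradient_left, hfv]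
    exact mul_le_mul_of_nonneg_left (hfK _ (hz (hball hzball))).le ht
  have hnear : ∀ᶠ t : ℝ in 𝓝 0, z₀ + t • v ∈ ball z₀ δ :=
    (Continuous.tendsto' (by fun_prop) 0 z₀ (by simp)).eventually
      (isOpen_ball.mem_nhds (mem_ball_self hδ))
  have hslope : ∀ᶠ t in 𝓝[>] (0 : ℝ), t⁻¹ • (w (z₀ + t • v) - w z₀) ≤ s := by
    filter_upwards [self_mem_nhdsWithin, nhdsWithin_le_nhds hnear] with t (ht : 0 < t) hmem
    rw [smul_eq_mul, inv_mul_le_iff₀ ht]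
    exact (hdom _).trans <| csSup_le (hFne.image _) <|
      forall_mem_image.2 fun u hu => hinc u hu t ht.le hmem
  have hderiv := le_of_tendsto (hw.hasFDerivAt.hasLineDerivAt v).tendsto_slope_zero_right hslope
  rw [← inner_gradient_left, hfv] at hderiv
  linarith

end InnerProductSpace

theorem exists_pos_norm_le_of_le {E Y : Type*} [SeminormedAddCommGroup E] {H : E → Y → ℝ}
    (hcoer : ∀ M : ℝ, ∃ R : ℝ, ∀ p y, R ≤ ‖p‖ → M ≤ H p y) (μ : ℝ) :
    ∃ R > 0, ∀ p y, H p y ≤ μ → ‖p‖ ≤ R := by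
  obtain ⟨R, hR⟩ := hcoer (μ + 1)
  refine ⟨max R 1, lt_max_of_lt_right one_pos, fun p y hp => ?_⟩
  by_contra! h
  linarith [hR p y ((le_max_left R 1).trans h.le)]

theorem Continuous.convex_setOf_le_of_midpoint {E : Type*} [AddCommGroup E] [Module ℝ E]
    [TopologicalSpace E] [IsTopologicalAddGroup E] [ContinuousSMul ℝ E] {f : E → ℝ}
    (hf : Continuous f) (hqc : ∀ p q, f (midpoint ℝ p q) ≤ max (f p) (f q)) (c : ℝ) :
    Convex ℝ {q | f q ≤ c} :=
  (isClosed_le hf continuous_const).convex_of_midpoint_mem fun p hp q hq =>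
    (hqc p q).trans (max_le hp hq)

def subsolutions (d : ℕ) (H : Ed d → Ed d → ℝ) (μ : ℝ) : Set (Ed d → ℝ) :=
  {u | u ∈ LipFuns d ∧ ∀ᵐ z ∂volume, H (gradient u z) z ≤ μ}

section Subsolutions

variable {d : ℕ} {H : Ed d → Ed d → ℝ} {μ : ℝ}

theorem mMu_eq_sSup_image (y x : Ed d) :
    mMu d H μ y x = sSup ((fun u => u y - u x) '' subsolutions d H μ) := by
  simp only [mMu, subsolutions, image, mem_ofPred_eq, and_assoc, eq_comm]

theorem subsolutions_nonempty
    (hbdd : ∀ R : ℝ, 0 < R → ∃ M : ℝ, ∀ p y : Ed d, ‖p‖ ≤ R → |H p y| ≤ M)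
    (hμ : Hstar d H < μ) : (subsolutions d H μ).Nonempty := by
  obtain ⟨_, ⟨u, ⟨C, hC⟩, rfl⟩, hlt⟩ :=
    exists_lt_of_csInf_lt (by exact ⟨_, 0, ⟨0, LipschitzWith.const 0⟩, rfl⟩) hμ
  obtain ⟨M, hM⟩ := hbdd (C + 1) (by positivity)
  have hbddu : IsBoundedUnder (· ≤ ·) (ae volume) fun y => H (gradient u y) y :=
    isBoundedUnder_of ⟨M, fun z =>
      (abs_le.1 (hM _ _ ((hC.norm_gradient_le_s11 z).trans (by linarith)))).2⟩
  exact ⟨u, ⟨C, hC⟩, (ae_lt_of_essSup_lt hlt hbddu).mono fun _ => le_of_lt⟩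

variable {R : ℝ} (hgrad : ∀ p y, H p y ≤ μ → ‖p‖ ≤ R)
include hgrad

theorem sub_le_mMu_of_mem_subsolutions {w : Ed d → ℝ} (hw : w ∈ subsolutions d H μ)
    (x y : Ed d) : w y - w x ≤ mMu d H μ y x := by
  rw [mMu_eq_sSup_image]
  refine le_csSup ⟨R * ‖y - x‖, forall_mem_image.2 fun u hu => ?_⟩ (mem_image_of_mem _ hw)
  obtain ⟨⟨C, hC⟩, hu⟩ := hu
  exact hC.sub_le_of_ae_norm_gradient_le volume (hu.mono fun z hz => hgrad _ _ hz) x y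

theorem ae_le_of_forall_sub_le_mMu (hHcont : Continuous fun q : Ed d × Ed d => H q.1 q.2)
    (hreg_uc : ∀ ε : ℝ, 0 < ε → ∃ δ : ℝ, 0 < δ ∧ ∀ p p' y y' : Ed d,
      ‖p‖ ≤ R → ‖p'‖ ≤ R → ‖p - p'‖ < δ → ‖y - y'‖ < δ → |H p y - H p' y'| < ε)
    (hqc : ∀ p q y : Ed d, H ((1/2 : ℝ) • (p + q)) y ≤ max (H p y) (H q y))
    (hsub : (subsolutions d H μ).Nonempty) {w : Ed d → ℝ} {C : ℝ≥0} (hw : LipschitzWith C w)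
    (hdom : ∀ x y : Ed d, w y - w x ≤ mMu d H μ y x) :
    ∀ᵐ y ∂volume, H (gradient w y) y ≤ μ := by
  filter_upwards [hw.ae_differentiableAt] with z₀ hz₀
  refine le_of_forall_pos_le_add fun ε hε => ?_
  obtain ⟨δ, hδ, hδH⟩ := hreg_uc ε hε
  have hHz₀ : Continuous fun q => H q z₀ := hHcont.comp (Continuous.prodMk_left z₀)
  have hK := hHz₀.convex_setOf_le_of_midpoint
    (fun p q => by simpa [midpoint_eq_smul_add] using hqc p q z₀) (μ + ε)
  refine gradient_mem_of_sub_le_sSup volume hK (isClosed_le hHz₀ continuous_const) hsub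
    (fun u hu => hu.1) (ball_mem_nhds z₀ hδ) ?_ hz₀
    fun y => mMu_eq_sSup_image y z₀ ▸ hdom z₀ y
  rintro u ⟨-, hu⟩
  filter_upwards [hu] with z hz hzball
  have hq := hgrad _ _ hz
  have hclose := hδH _ _ z z₀ hq hq (by simpa using hδ) (mem_ball_iff_norm.1 hzball)
  show H _ z₀ ≤ μ + ε
  linarith [(abs_lt.1 hclose).1]

end Subsolutions

theorem statement_11_general
    (d : ℕ)
    (H : Ed d → Ed d → ℝ)
    (hHcont : Continuous fun q : Ed d × Ed d => H q.1 q.2)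
    (hreg_bdd : ∀ R : ℝ, 0 < R → ∃ M : ℝ, ∀ p y : Ed d, ‖p‖ ≤ R → |H p y| ≤ M)
    (hreg_uc : ∀ R : ℝ, 0 < R → ∀ ε : ℝ, 0 < ε → ∃ δ : ℝ, 0 < δ ∧ ∀ p p' y y' : Ed d,
      ‖p‖ ≤ R → ‖p'‖ ≤ R → ‖p - p'‖ < δ → ‖y - y'‖ < δ → |H p y - H p' y'| < ε)
    (hcoer : ∀ M : ℝ, ∃ R : ℝ, ∀ p y : Ed d, R ≤ ‖p‖ → M ≤ H p y)
    (hqc : ∀ p q y : Ed d, H ((1/2 : ℝ) • (p + q)) y ≤ max (H p y) (H q y))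
    (μ : ℝ) (hμ : Hstar d H < μ) (w : Ed d → ℝ) (hw : w ∈ LipFuns d) :
    (∀ x y : Ed d, w y - w x ≤ mMu d H μ y x) ↔
      (∀ᵐ y ∂volume, H (gradient w y) y ≤ μ) := by
  obtain ⟨R, hR, hgrad⟩ := exists_pos_norm_le_of_le hcoer μ
  obtain ⟨C, hC⟩ := hw
  exact ⟨ae_le_of_forall_sub_le_mMu hgrad hHcont (hreg_uc R hR) hqc
      (subsolutions_nonempty hreg_bdd hμ) hC,
    fun hsub => sub_le_mMu_of_mem_subsolutions hgrad ⟨⟨C, hC⟩, hsub⟩⟩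

/-- domination by m_μ characterizes subsolutions. -/
theorem statement_11
    (d : ℕ) (hd : 0 < d)
    (H : Ed d → Ed d → ℝ)
    (hHcont : Continuous fun q : Ed d × Ed d => H q.1 q.2)
    (hreg_bdd : ∀ R : ℝ, 0 < R → ∃ M : ℝ, ∀ p y : Ed d, ‖p‖ ≤ R → |H p y| ≤ M)
    (hreg_uc : ∀ R : ℝ, 0 < R → ∀ ε : ℝ, 0 < ε → ∃ δ : ℝ, 0 < δ ∧ ∀ p p' y y' : Ed d,
      ‖p‖ ≤ R → ‖p'‖ ≤ R → ‖p - p'‖ < δ → ‖y - y'‖ < δ → |H p y - H p' y'| < ε)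
    (hcoer : ∀ M : ℝ, ∃ R : ℝ, ∀ p y : Ed d, R ≤ ‖p‖ → M ≤ H p y)
    (hqc : ∀ p q y : Ed d, H ((1/2 : ℝ) • (p + q)) y ≤ max (H p y) (H q y))
    (Λ : ℝ → ℝ → ℝ)
    (hΛcont : Continuous fun m : ℝ × ℝ => Λ m.1 m.2)
    (hΛmono : ∀ a b a' b' : ℝ, a ≤ a' → b ≤ b' → Λ a b ≤ Λ a' b')
    (hΛstrict : ∀ a b : ℝ, a ≠ b → Λ a b < max a b)
    (hsqc : ∀ p q y : Ed d, H ((1/2 : ℝ) • (p + q)) y ≤ Λ (H p y) (H q y))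
    (μ : ℝ) (hμ : Hstar d H < μ) (w : Ed d → ℝ) (hw : w ∈ LipFuns d) :
    (∀ x y : Ed d, w y - w x ≤ mMu d H μ y x) ↔
      (∀ᵐ y ∂volume, H (gradient w y) y ≤ μ) :=
  statement_11_general d H hHcont hreg_bdd hreg_uc hcoer hqc μ hμ w hw
end
end
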